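/- arXiv:2507.07348 — 8 statements merged into one kernel-verified Lean document; each statement's English description precedes it below -/
import Mathlib

section
/- Let X and Y be metric spaces, let f : X × Y → ℝ be bounded and Lipschitz with constant L_f (with respect to the max metric on X × Y), and let μ : X → (Borel probability measures on Y), written x ↦ μ_x, be coupling-Lipschitz with constant L_μ. Define g : X → ℝ by g(x) := ∫_Y f(x, y) dμ_x(y). Then sup_{x ∈ X} |g(x)| ≤ sup_{(x,y) ∈ X×Y} |f(x,y)|, and g is Lipschitz with constant L_f · (1 + L_μ). -/
open MeasureTheory
open scoped ENNReal NNReal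

/-- A coupling of two Borel probability measures `μ` and `ν` on `X` is a probability
measure on `X × X` whose marginals are `μ` and `ν`. -/
def IsCoupling {X : Type*} [MeasurableSpace X] (Γ : Measure (X × X)) (μ ν : Measure X) : Prop :=
  IsProbabilityMeasure Γ ∧ Γ.map Prod.fst = μ ∧ Γ.map Prod.snd = ν

/-- A map `κ` from a metric space to Borel probability measures on a metric space is
coupling-Lipschitz with constant `L` if any two of its values admit a coupling whose
expected distance is at most `L` times the distance of the inputs (Lipschitz continuity
into Wasserstein-1 space, expressed via couplings). -/
def CouplingLipschitzWith {Z X : Type*} [PseudoEMetricSpace Z] [PseudoEMetricSpace X]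
    [MeasurableSpace X] (L : ℝ≥0) (κ : Z → Measure X) : Prop :=
  ∀ z₁ z₂ : Z, ∃ Γ : Measure (X × X), IsCoupling Γ (κ z₁) (κ z₂) ∧
    ∫⁻ q, edist q.1 q.2 ∂Γ ≤ (L : ℝ≥0∞) * edist z₁ z₂

/-- **Lemma B.2.** If `f : X × Y → ℝ` is bounded and `Lf`-Lipschitz (max metric on the
product) and `x ↦ μ x` is a coupling-Lipschitz family of Borel probability measures on `Y`
with constant `Lμ`, then `g x := ∫ f(x, y) dμ_x(y)` satisfies `sup |g| ≤ sup |f|` and `g`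
is Lipschitz with constant `Lf · (1 + Lμ)`. -/
theorem stmt1 {X Y : Type*} [MetricSpace X] [MetricSpace Y] [MeasurableSpace Y] [BorelSpace Y]
    (Lf Lμ : ℝ≥0) (f : X × Y → ℝ)
    (hf_bdd : ∃ M, ∀ q, |f q| ≤ M)
    (hf_lip : LipschitzWith Lf f)
    (μ : X → Measure Y) (hμ_prob : ∀ x, IsProbabilityMeasure (μ x))
    (hμ_lip : CouplingLipschitzWith Lμ μ) :
    (∀ x, |∫ y, f (x, y) ∂μ x| ≤ ⨆ q : X × Y, |f q|) ∧
      LipschitzWith (Lf * (1 + Lμ)) (fun x => ∫ y, f (x, y) ∂μ x) := by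
  obtain ⟨M, hM⟩ := hf_bdd
  have hbdd : BddAbove (Set.range fun q : X × Y => |f q|) :=
    ⟨M, by rintro r ⟨q, rfl⟩; exact hM q⟩
  have hcont : ∀ x : X, Continuous fun y => f (x, y) :=
    fun x => hf_lip.continuous.comp (Continuous.prodMk_right x)
  have hint : ∀ x : X, Integrable (fun y => f (x, y)) (μ x) := fun x => by
    haveI := hμ_prob x
    exact Integrable.mono' (integrable_const M) ((hcont x).aestronglyMeasurable)
      (ae_of_all _ fun y => by simpa [Real.norm_eq_abs] using hM (x, y))
  constructor
  · intro x
    haveI := hμ_prob x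
    calc |∫ y, f (x, y) ∂μ x| ≤ ∫ y, |f (x, y)| ∂μ x := by
          simpa [Real.norm_eq_abs] using norm_integral_le_integral_norm fun y => f (x, y)
      _ ≤ ∫ _y, (⨆ q : X × Y, |f q|) ∂μ x :=
          integral_mono (hint x).abs (integrable_const _) fun y => le_ciSup hbdd (x, y)
      _ = ⨆ q : X × Y, |f q| := by simp
  · intro x₁ x₂
    obtain ⟨Γ, ⟨hΓp, hΓ1, hΓ2⟩, hcost⟩ := hμ_lip x₁ x₂
    haveI := hΓp
    set F₁ : Y × Y → ℝ := fun q => f (x₁, q.1) with hF₁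
    set F₂ : Y × Y → ℝ := fun q => f (x₂, q.2) with hF₂
    have sm1 : StronglyMeasurable F₁ :=
      ((hcont x₁).stronglyMeasurable).comp_measurable measurable_fst
    have sm2 : StronglyMeasurable F₂ :=
      ((hcont x₂).stronglyMeasurable).comp_measurable measurable_snd
    have i1 : Integrable F₁ Γ :=
      Integrable.mono' (integrable_const M) sm1.aestronglyMeasurable
        (ae_of_all _ fun q => by simpa [hF₁, Real.norm_eq_abs] using hM (x₁, q.1))
    have i2 : Integrable F₂ Γ :=
      Integrable.mono' (integrable_const M) sm2.aestronglyMeasurable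
        (ae_of_all _ fun q => by simpa [hF₂, Real.norm_eq_abs] using hM (x₂, q.2))
    have e1 : ∫ y, f (x₁, y) ∂μ x₁ = ∫ q, F₁ q ∂Γ := by
      rw [← hΓ1, integral_map measurable_fst.aemeasurable]
      rw [hΓ1]
      exact (hcont x₁).aestronglyMeasurable
    have e2 : ∫ y, f (x₂, y) ∂μ x₂ = ∫ q, F₂ q ∂Γ := by
      rw [← hΓ2, integral_map measurable_snd.aemeasurable]
      rw [hΓ2]
      exact (hcont x₂).aestronglyMeasurable
    have hsub : (∫ y, f (x₁, y) ∂μ x₁) - (∫ y, f (x₂, y) ∂μ x₂) = ∫ q, (F₁ q - F₂ q) ∂Γ := by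
      rw [e1, e2, integral_sub i1 i2]
    have hpt : ∀ q : Y × Y, (‖F₁ q - F₂ q‖₊ : ℝ≥0∞)
        ≤ (Lf : ℝ≥0∞) * edist x₁ x₂ + (Lf : ℝ≥0∞) * edist q.1 q.2 := by
      intro q
      have h1 : (‖F₁ q - F₂ q‖₊ : ℝ≥0∞) = edist (f (x₁, q.1)) (f (x₂, q.2)) :=
        (edist_eq_enorm_sub _ _).symm
      have h2 : edist (f (x₁, q.1)) (f (x₂, q.2)) ≤ (Lf : ℝ≥0∞) * edist (x₁, q.1) (x₂, q.2) :=
        hf_lip _ _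
      have h3 : edist ((x₁, q.1) : X × Y) (x₂, q.2) ≤ edist x₁ x₂ + edist q.1 q.2 := by
        rw [Prod.edist_eq]
        exact sup_le le_self_add le_add_self
      calc (‖F₁ q - F₂ q‖₊ : ℝ≥0∞) ≤ (Lf : ℝ≥0∞) * edist (x₁, q.1) (x₂, q.2) := h1 ▸ h2
        _ ≤ (Lf : ℝ≥0∞) * (edist x₁ x₂ + edist q.1 q.2) := mul_le_mul_right h3 _
        _ = (Lf : ℝ≥0∞) * edist x₁ x₂ + (Lf : ℝ≥0∞) * edist q.1 q.2 := mul_add _ _ _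
    have key : edist (∫ y, f (x₁, y) ∂μ x₁) (∫ y, f (x₂, y) ∂μ x₂)
        ≤ (Lf : ℝ≥0∞) * edist x₁ x₂ + (Lf : ℝ≥0∞) * ((Lμ : ℝ≥0∞) * edist x₁ x₂) := by
      rw [edist_eq_enorm_sub, hsub]
      calc (‖∫ q, F₁ q - F₂ q ∂Γ‖₊ : ℝ≥0∞)
          ≤ ∫⁻ q, ‖F₁ q - F₂ q‖₊ ∂Γ := enorm_integral_le_lintegral_enorm _
        _ ≤ ∫⁻ q, ((Lf : ℝ≥0∞) * edist x₁ x₂ + (Lf : ℝ≥0∞) * edist q.1 q.2) ∂Γ :=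
            lintegral_mono hpt
        _ = (Lf : ℝ≥0∞) * edist x₁ x₂ + (Lf : ℝ≥0∞) * ∫⁻ q, edist q.1 q.2 ∂Γ := by
            rw [lintegral_add_left measurable_const, lintegral_const, measure_univ, mul_one,
              lintegral_const_mul' _ _ (by finiteness)]
        _ ≤ (Lf : ℝ≥0∞) * edist x₁ x₂ + (Lf : ℝ≥0∞) * ((Lμ : ℝ≥0∞) * edist x₁ x₂) :=
            add_le_add le_rfl (mul_le_mul_right hcost _)
    calc edist (∫ y, f (x₁, y) ∂μ x₁) (∫ y, f (x₂, y) ∂μ x₂)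
        ≤ (Lf : ℝ≥0∞) * edist x₁ x₂ + (Lf : ℝ≥0∞) * ((Lμ : ℝ≥0∞) * edist x₁ x₂) := key
      _ = ((Lf * (1 + Lμ) : ℝ≥0) : ℝ≥0∞) * edist x₁ x₂ := by
          push_cast
          ring
end

section
/- Let S and A be metric spaces with their Borel σ-algebras, let Q : S × A → ℝ be bounded and Lipschitz with constant L_Q, let π : S → (Borel probability measures on A) be coupling-Lipschitz with constant L_π, and let T : S × A → (Borel probability measures on S) be coupling-Lipschitz with constant L_T (with respect to the max metric on S × A). Then the function A^{T,π}Q, defined by (A^{T,π}Q)(s,a) := ∫_S ∫_A Q(s',a') dπ(s')(a') dT(s,a)(s'), is Lipschitz with constant L_Q · L_T · (1 + L_π). -/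
open MeasureTheory
open scoped ENNReal NNReal

lemma coupling_core {X : Type*} [MeasurableSpace X] {μ ν : Measure X} {Γ : Measure (X × X)}
    (hΓ : IsCoupling Γ μ ν) {F G : X → ℝ}
    (hF : Measurable F) (hG : Measurable G) {M : ℝ}
    (hFb : ∀ x, |F x| ≤ M) (hGb : ∀ x, |G x| ≤ M) :
    edist (∫ x, F x ∂μ) (∫ x, G x ∂ν) ≤ ∫⁻ q, edist (F q.1) (G q.2) ∂Γ := by
  obtain ⟨hΓp, h1, h2⟩ := hΓ
  haveI := hΓp
  have hFi : Integrable (fun q : X × X => F q.1) Γ :=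
    (integrable_const M).mono' ((hF.comp measurable_fst).aestronglyMeasurable)
      (ae_of_all _ fun q => by simpa using hFb q.1)
  have hGi : Integrable (fun q : X × X => G q.2) Γ :=
    (integrable_const M).mono' ((hG.comp measurable_snd).aestronglyMeasurable)
      (ae_of_all _ fun q => by simpa using hGb q.2)
  have hμ : ∫ x, F x ∂μ = ∫ q, F q.1 ∂Γ := by
    rw [← h1, integral_map measurable_fst.aemeasurable hF.aestronglyMeasurable]
  have hν : ∫ x, G x ∂ν = ∫ q, G q.2 ∂Γ := by
    rw [← h2, integral_map measurable_snd.aemeasurable hG.aestronglyMeasurable]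
  rw [hμ, hν, edist_dist, Real.dist_eq, ← integral_sub hFi hGi]
  calc ENNReal.ofReal |∫ q, (F q.1 - G q.2) ∂Γ|
      ≤ ENNReal.ofReal (∫ q, |F q.1 - G q.2| ∂Γ) :=
        ENNReal.ofReal_le_ofReal (by simpa [Real.norm_eq_abs] using
          norm_integral_le_integral_norm (fun q : X × X => F q.1 - G q.2))
    _ = ∫⁻ q, ENNReal.ofReal |F q.1 - G q.2| ∂Γ :=
        ofReal_integral_eq_lintegral_ofReal (hFi.sub hGi).abs (ae_of_all _ fun q => abs_nonneg _)
    _ = ∫⁻ q, edist (F q.1) (G q.2) ∂Γ := by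
        simp [edist_dist, Real.dist_eq]

lemma gen_lip {Z X : Type*} [PseudoEMetricSpace Z] [MetricSpace X] [MeasurableSpace X]
    (L K₁ K₂ : ℝ≥0) (κ : Z → Measure X)
    (hlip : CouplingLipschitzWith L κ)
    (h : Z → X → ℝ) (hm : ∀ z, Measurable (h z)) (M : ℝ) (hb : ∀ z x, |h z x| ≤ M)
    (hK : ∀ z₁ z₂ x₁ x₂, edist (h z₁ x₁) (h z₂ x₂) ≤ K₁ * edist z₁ z₂ + K₂ * edist x₁ x₂) :
    LipschitzWith (K₁ + K₂ * L) (fun z => ∫ x, h z x ∂κ z) := by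
  intro z₁ z₂
  obtain ⟨Γ, hΓ, hint⟩ := hlip z₁ z₂
  haveI := hΓ.1
  calc edist (∫ x, h z₁ x ∂κ z₁) (∫ x, h z₂ x ∂κ z₂)
      ≤ ∫⁻ q, edist (h z₁ q.1) (h z₂ q.2) ∂Γ :=
        coupling_core hΓ (hm z₁) (hm z₂) (hb z₁) (hb z₂)
    _ ≤ ∫⁻ q, ((K₁ : ℝ≥0∞) * edist z₁ z₂ + (K₂ : ℝ≥0∞) * edist q.1 q.2) ∂Γ :=
        lintegral_mono fun q => hK z₁ z₂ q.1 q.2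
    _ = (K₁ : ℝ≥0∞) * edist z₁ z₂ + (K₂ : ℝ≥0∞) * ∫⁻ q, edist q.1 q.2 ∂Γ := by
        rw [lintegral_add_left measurable_const, lintegral_const,
          lintegral_const_mul' _ _ ENNReal.coe_ne_top, measure_univ, mul_one]
    _ ≤ (K₁ : ℝ≥0∞) * edist z₁ z₂ + (K₂ : ℝ≥0∞) * ((L : ℝ≥0∞) * edist z₁ z₂) :=
        add_le_add_right (mul_le_mul_right hint _) _
    _ = ((K₁ + K₂ * L : ℝ≥0) : ℝ≥0∞) * edist z₁ z₂ := by push_cast; ring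

/-- **Lipschitz bound in Lemma B.3.** If `Q` is bounded and `L_Q`-Lipschitz, the policy `π`
is coupling-Lipschitz with constant `L_π`, and the transition map `T` is coupling-Lipschitz
with constant `L_T` (max metric on `S × A`), then the Bellman operator applied to `Q`,
`(s,a) ↦ ∫∫ Q dπ dT(s,a)`, is Lipschitz with constant `L_Q · L_T · (1 + L_π)`. -/
theorem stmt3 {S A : Type*} [MetricSpace S] [MeasurableSpace S] [BorelSpace S]
    [MetricSpace A] [MeasurableSpace A] [BorelSpace A]
    (LQ Lπ LT : ℝ≥0)
    (Q : S × A → ℝ) (hQ_bdd : ∃ M, ∀ q, |Q q| ≤ M) (hQ_lip : LipschitzWith LQ Q)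
    (π : S → Measure A) (hπ_prob : ∀ s, IsProbabilityMeasure (π s))
    (hπ_lip : CouplingLipschitzWith Lπ π)
    (T : S × A → Measure S) (hT_prob : ∀ p, IsProbabilityMeasure (T p))
    (hT_lip : CouplingLipschitzWith LT T) :
    LipschitzWith (LQ * LT * (1 + Lπ))
      (fun p : S × A => ∫ s', ∫ a', Q (s', a') ∂π s' ∂T p) := by
  obtain ⟨M, hM⟩ := hQ_bdd
  have hQc : Continuous Q := hQ_lip.continuous
  have hQm : ∀ s : S, Measurable fun a => Q (s, a) :=
    fun s => (hQc.comp (Continuous.prodMk_right s)).measurable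
  have hK : ∀ (s₁ s₂ : S) (a₁ a₂ : A),
      edist (Q (s₁, a₁)) (Q (s₂, a₂)) ≤ (LQ : ℝ≥0∞) * edist s₁ s₂ + (LQ : ℝ≥0∞) * edist a₁ a₂ := by
    intro s₁ s₂ a₁ a₂
    calc edist (Q (s₁, a₁)) (Q (s₂, a₂)) ≤ LQ * edist (s₁, a₁) (s₂, a₂) := hQ_lip _ _
      _ ≤ (LQ : ℝ≥0∞) * (edist s₁ s₂ + edist a₁ a₂) := by
          apply mul_le_mul_right
          rw [Prod.edist_eq]
          exact max_le le_self_add le_add_self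
      _ = _ := mul_add _ _ _
  have hg : LipschitzWith (LQ + LQ * Lπ) (fun s' => ∫ a', Q (s', a') ∂π s') :=
    gen_lip Lπ LQ LQ π hπ_lip (fun s a => Q (s, a)) hQm M (fun s a => hM (s, a)) hK
  have hgb : ∀ s', |∫ a', Q (s', a') ∂π s'| ≤ M := by
    intro s'
    haveI := hπ_prob s'
    have := norm_integral_le_of_norm_le_const (μ := π s') (C := M)
      (f := fun a => Q (s', a)) (ae_of_all _ fun a => by simpa using hM (s', a))
    simpa using this
  have hfin : LipschitzWith (0 + (LQ + LQ * Lπ) * LT)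
      (fun p : S × A => ∫ s', ∫ a', Q (s', a') ∂π s' ∂T p) := by
    apply gen_lip LT 0 (LQ + LQ * Lπ) T hT_lip (fun _ s' => ∫ a', Q (s', a') ∂π s')
      (fun _ => hg.continuous.measurable) M (fun _ s' => hgb s')
    intro z₁ z₂ x₁ x₂
    calc edist (∫ a', Q (x₁, a') ∂π x₁) (∫ a', Q (x₂, a') ∂π x₂)
        ≤ ((LQ + LQ * Lπ : ℝ≥0) : ℝ≥0∞) * edist x₁ x₂ := hg x₁ x₂
      _ ≤ _ := by simp
  have hc : (0 + (LQ + LQ * Lπ) * LT) = LQ * LT * (1 + Lπ) := by ring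
  rwa [hc] at hfin
end

section
/- Let S and A be metric spaces with their Borel σ-algebras, let Q : S × A → ℝ be bounded and Lipschitz, let π : S → (Borel probability measures on A) be coupling-Lipschitz with constant L_π, and let T⁽¹⁾, T⁽²⁾ : S × A → (Borel probability measures on S) be such that for every (s,a) ∈ S × A there exists a coupling Γ of T⁽¹⁾(s,a) and T⁽²⁾(s,a) with ∫_{S×S} d(s₁,s₂) dΓ(s₁,s₂) ≤ δ. Then for all (s,a) ∈ S × A, |(A^{T⁽¹⁾,π}Q)(s,a) − (A^{T⁽²⁾,π}Q)(s,a)| ≤ ‖Q‖_Lip · (1 + L_π) · δ, where (A^{T,π}Q)(s,a) := ∫_S ∫_A Q(s',a') dπ(s')(a') dT(s,a)(s'). -/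
open MeasureTheory
open scoped ENNReal NNReal

lemma key_coupling_bound {X : Type*} [MetricSpace X] [MeasurableSpace X]
    (K : ℝ≥0) (D c : ℝ≥0∞) (M : ℝ) (f g : X → ℝ)
    (hf : Measurable f) (hg : Measurable g)
    (hfb : ∀ x, |f x| ≤ M) (hgb : ∀ x, |g x| ≤ M)
    (hfg : ∀ x y : X, ENNReal.ofReal |f x - g y| ≤ D + (K : ℝ≥0∞) * edist x y)
    (μ ν : Measure X) (Γ : Measure (X × X)) (hΓ : IsCoupling Γ μ ν)
    (hc : ∫⁻ q, edist q.1 q.2 ∂Γ ≤ c) :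
    ENNReal.ofReal |(∫ x, f x ∂μ) - ∫ x, g x ∂ν| ≤ D + (K : ℝ≥0∞) * c := by
  obtain ⟨hP, h1, h2⟩ := hΓ
  haveI := hP
  have hμ : ∫ x, f x ∂μ = ∫ q : X × X, f q.1 ∂Γ := by
    rw [← h1, integral_map measurable_fst.aemeasurable hf.aestronglyMeasurable]
  have hν : ∫ x, g x ∂ν = ∫ q : X × X, g q.2 ∂Γ := by
    rw [← h2, integral_map measurable_snd.aemeasurable hg.aestronglyMeasurable]
  have hint1 : Integrable (fun q : X × X => f q.1) Γ :=
    (integrable_const M).mono' (hf.comp measurable_fst).aestronglyMeasurable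
      (ae_of_all _ fun q => by simpa [Real.norm_eq_abs] using hfb q.1)
  have hint2 : Integrable (fun q : X × X => g q.2) Γ :=
    (integrable_const M).mono' (hg.comp measurable_snd).aestronglyMeasurable
      (ae_of_all _ fun q => by simpa [Real.norm_eq_abs] using hgb q.2)
  have hdiff : (∫ x, f x ∂μ) - ∫ x, g x ∂ν = ∫ q : X × X, (f q.1 - g q.2) ∂Γ := by
    rw [hμ, hν, ← integral_sub hint1 hint2]
  have hnorm : ‖∫ q : X × X, (f q.1 - g q.2) ∂Γ‖ ≤
      (∫⁻ q : X × X, ENNReal.ofReal ‖f q.1 - g q.2‖ ∂Γ).toReal :=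
    norm_integral_le_lintegral_norm _
  have hlint : (∫⁻ q : X × X, ENNReal.ofReal ‖f q.1 - g q.2‖ ∂Γ) ≤ D + (K : ℝ≥0∞) * c := by
    calc (∫⁻ q : X × X, ENNReal.ofReal ‖f q.1 - g q.2‖ ∂Γ)
        ≤ ∫⁻ q : X × X, (D + (K : ℝ≥0∞) * edist q.1 q.2) ∂Γ := by
          refine lintegral_mono fun q => ?_
          simpa [Real.norm_eq_abs] using hfg q.1 q.2
      _ = D + (K : ℝ≥0∞) * ∫⁻ q : X × X, edist q.1 q.2 ∂Γ := by
          rw [lintegral_add_left measurable_const, lintegral_const,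
            lintegral_const_mul' _ _ ENNReal.coe_ne_top, measure_univ, mul_one]
      _ ≤ D + (K : ℝ≥0∞) * c := by gcongr
  calc ENNReal.ofReal |(∫ x, f x ∂μ) - ∫ x, g x ∂ν|
      ≤ ENNReal.ofReal ((∫⁻ q : X × X, ENNReal.ofReal ‖f q.1 - g q.2‖ ∂Γ).toReal) := by
        apply ENNReal.ofReal_le_ofReal
        rw [hdiff]
        simpa [Real.norm_eq_abs] using hnorm
    _ ≤ ∫⁻ q : X × X, ENNReal.ofReal ‖f q.1 - g q.2‖ ∂Γ := ENNReal.ofReal_toReal_le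
    _ ≤ D + (K : ℝ≥0∞) * c := hlint

/-- **Lemma B.5.** Stability of the Bellman operator under perturbations of the transition
map: if `Q` is bounded (by `M`) and `L_Q`-Lipschitz, `π` is coupling-Lipschitz with
constant `L_π`, and for every state-action pair the transition measures `T₁(s,a)` and
`T₂(s,a)` admit a coupling of transport cost at most `δ`, then
`|(A^{T₁,π}Q)(s,a) − (A^{T₂,π}Q)(s,a)| ≤ max(M, L_Q)·(1 + L_π)·δ`
(where `max(M, L_Q)` ranges over all sup-bounds `M` and Lipschitz constants `L_Q` of `Q`,
hence in particular bounds via `‖Q‖_Lip`). -/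
theorem stmt5 {S A : Type*} [MetricSpace S] [MeasurableSpace S] [BorelSpace S]
    [MetricSpace A] [MeasurableSpace A] [BorelSpace A]
    (M : ℝ) (LQ Lπ δ : ℝ≥0)
    (Q : S × A → ℝ) (hQ_bdd : ∀ q, |Q q| ≤ M) (hQ_lip : LipschitzWith LQ Q)
    (π : S → Measure A) (hπ_prob : ∀ s, IsProbabilityMeasure (π s))
    (hπ_lip : CouplingLipschitzWith Lπ π)
    (T₁ T₂ : S × A → Measure S)
    (hT₁_prob : ∀ p, IsProbabilityMeasure (T₁ p))
    (hT₂_prob : ∀ p, IsProbabilityMeasure (T₂ p))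
    (h_close : ∀ p : S × A, ∃ Γ : Measure (S × S), IsCoupling Γ (T₁ p) (T₂ p) ∧
      ∫⁻ q, edist q.1 q.2 ∂Γ ≤ (δ : ℝ≥0∞)) :
    ∀ p : S × A,
      |(∫ s', ∫ a', Q (s', a') ∂π s' ∂T₁ p) - ∫ s', ∫ a', Q (s', a') ∂π s' ∂T₂ p| ≤
        max M (LQ : ℝ) * (1 + (Lπ : ℝ)) * (δ : ℝ) := by
  intro p
  set g : S → ℝ := fun s => ∫ a', Q (s, a') ∂π s with hg_def
  -- measurability of slices of Q
  have hQs_meas : ∀ s : S, Measurable (fun a => Q (s, a)) := fun s =>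
    (hQ_lip.comp (LipschitzWith.prodMk_left s)).continuous.measurable
  -- cross Lipschitz bound for slices
  have hcross : ∀ (s₁ s₂ : S) (x y : A),
      ENNReal.ofReal |Q (s₁, x) - Q (s₂, y)| ≤
        (LQ : ℝ≥0∞) * edist s₁ s₂ + (LQ : ℝ≥0∞) * edist x y := by
    intro s₁ s₂ x y
    have h1 : ENNReal.ofReal |Q (s₁, x) - Q (s₂, y)| = edist (Q (s₁, x)) (Q (s₂, y)) := by
      rw [edist_dist, Real.dist_eq]
    have h2 := hQ_lip ((s₁, x)) ((s₂, y))
    have h3 : edist ((s₁, x) : S × A) ((s₂, y)) ≤ edist s₁ s₂ + edist x y := by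
      rw [Prod.edist_eq]
      exact max_le (le_add_right le_rfl) (le_add_left le_rfl)
    rw [h1]
    calc edist (Q (s₁, x)) (Q (s₂, y)) ≤ (LQ : ℝ≥0∞) * edist ((s₁, x) : S × A) ((s₂, y)) := h2
      _ ≤ (LQ : ℝ≥0∞) * (edist s₁ s₂ + edist x y) := by gcongr
      _ = (LQ : ℝ≥0∞) * edist s₁ s₂ + (LQ : ℝ≥0∞) * edist x y := mul_add _ _ _
  -- g is bounded by M
  have hg_bdd : ∀ s, |g s| ≤ M := by
    intro s
    haveI := hπ_prob s
    have := norm_integral_le_of_norm_le_const (μ := π s)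
      (f := fun a => Q (s, a)) (C := M) (ae_of_all _ fun a => by
        simpa [Real.norm_eq_abs] using hQ_bdd (s, a))
    simpa [Real.norm_eq_abs, measure_univ] using this
  -- g is Lipschitz with constant LQ * (1 + Lπ)
  have hg_lip : LipschitzWith (LQ * (1 + Lπ)) g := by
    intro s₁ s₂
    obtain ⟨Γ, hΓ, hc⟩ := hπ_lip s₁ s₂
    have key := key_coupling_bound LQ ((LQ : ℝ≥0∞) * edist s₁ s₂)
      ((Lπ : ℝ≥0∞) * edist s₁ s₂) M (fun a => Q (s₁, a)) (fun a => Q (s₂, a))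
      (hQs_meas s₁) (hQs_meas s₂) (fun a => hQ_bdd (s₁, a)) (fun a => hQ_bdd (s₂, a))
      (hcross s₁ s₂) (π s₁) (π s₂) Γ hΓ hc
    have : edist (g s₁) (g s₂) = ENNReal.ofReal |g s₁ - g s₂| := by
      rw [edist_dist, Real.dist_eq]
    rw [this]
    calc ENNReal.ofReal |g s₁ - g s₂|
        ≤ (LQ : ℝ≥0∞) * edist s₁ s₂ + (LQ : ℝ≥0∞) * ((Lπ : ℝ≥0∞) * edist s₁ s₂) := key
      _ = ((LQ * (1 + Lπ) : ℝ≥0) : ℝ≥0∞) * edist s₁ s₂ := by push_cast; ring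
  have hg_meas : Measurable g := hg_lip.continuous.measurable
  obtain ⟨Γ, hΓ, hc⟩ := h_close p
  have hcross' : ∀ x y : S, ENNReal.ofReal |g x - g y| ≤
      0 + ((LQ * (1 + Lπ) : ℝ≥0) : ℝ≥0∞) * edist x y := by
    intro x y
    have := hg_lip x y
    rw [edist_dist, Real.dist_eq] at this
    simpa using this
  have key := key_coupling_bound (LQ * (1 + Lπ)) 0 (δ : ℝ≥0∞) M g g hg_meas hg_meas
    hg_bdd hg_bdd hcross' (T₁ p) (T₂ p) Γ hΓ hc
  rw [zero_add] at key
  have hfin : ((LQ * (1 + Lπ) : ℝ≥0) : ℝ≥0∞) * (δ : ℝ≥0∞) =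
      ENNReal.ofReal ((LQ * (1 + Lπ) : ℝ≥0) * (δ : ℝ≥0)) := by
    rw [← ENNReal.coe_mul, ← NNReal.coe_mul, ENNReal.ofReal_coe_nnreal]
  rw [hfin, ENNReal.ofReal_le_ofReal_iff (by positivity)] at key
  have : ((LQ * (1 + Lπ) : ℝ≥0) : ℝ) * (δ : ℝ≥0) ≤ max M (LQ : ℝ) * (1 + (Lπ : ℝ)) * (δ : ℝ) := by
    push_cast
    have h1 : (LQ : ℝ) ≤ max M (LQ : ℝ) := le_max_right _ _
    have h2 : (0:ℝ) ≤ (1 + (Lπ : ℝ)) * δ := by positivity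
    nlinarith [NNReal.coe_nonneg δ, NNReal.coe_nonneg Lπ]
  calc |(∫ s', ∫ a', Q (s', a') ∂π s' ∂T₁ p) - ∫ s', ∫ a', Q (s', a') ∂π s' ∂T₂ p|
      ≤ ((LQ * (1 + Lπ) : ℝ≥0) : ℝ) * (δ : ℝ≥0) := by simpa using key
    _ ≤ _ := this
end

section
/- Let S, A, E be real Banach spaces and let C ⊆ E be open and convex; S and A carry their Borel σ-algebras. Let γ ∈ (0,1). Let f : S × A × C → S be twice continuously differentiable with ‖Df‖_∞ := sup of the operator norm of its Fréchet derivative and ‖D²f‖_∞ := sup of the norm of its second derivative both finite, and let R : S × A × C → ℝ be twice continuously differentiable with ‖R‖_∞, ‖DR‖_∞, ‖D²R‖_∞ all finite. Let π : S → (Borel probability measures on A) be coupling-Lipschitz with constant L_π. Fix c₀, c ∈ C and assume γ · (‖Df‖_∞ + ‖D²f‖_∞·‖c − c₀‖) · (1 + L_π) < 1. Define the linearized dynamics f_ce(s,a) := f(s,a,c₀) + ∂_c f(s,a,c₀)·(c − c₀) and linearized reward R_ce(s,a) := R(s,a,c₀) + ∂_c R(s,a,c₀)·(c − c₀), where ∂_c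 denotes the partial Fréchet derivative in the third variable. Let Q be a bounded Lipschitz solution of Q(s,a) = R(s,a,c) + γ·∫_A Q(f(s,a,c), a') dπ(f(s,a,c))(a'), and let Q_ce be a bounded Lipschitz solution of Q_ce(s,a) = R_ce(s,a) + γ·∫_A Q_ce(f_ce(s,a), a') dπ(f_ce(s,a))(a'). Then sup_{(s,a)} |Q_ce(s,a) − Q(s,a)| ≤ (‖c − c₀‖² / (1 − γ)) · ( ‖D²R‖_∞ + γ·(1 + L_π)·‖D²f‖_∞·(‖R‖_∞ + ‖DR‖_∞) / (1 − γ·max(1, ‖Df‖_∞·(1 + L_π))) ). -/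
open MeasureTheory
open scoped ENNReal NNReal

set_option linter.unusedSectionVars false
set_option linter.unusedVariables false

section Aux
variable {S A E F : Type*}
  [NormedAddCommGroup S] [NormedSpace ℝ S]
  [NormedAddCommGroup A] [NormedSpace ℝ A]
  [NormedAddCommGroup E] [NormedSpace ℝ E]
  [NormedAddCommGroup F] [NormedSpace ℝ F]

/-- the inclusion `c' ↦ (s,a,c')` as a continuous linear map (its linear part). -/
noncomputable def incl : E →L[ℝ] S × A × E :=
  (0 : E →L[ℝ] S).prod ((0 : E →L[ℝ] A).prod (ContinuousLinearMap.id ℝ E))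

lemma incl_norm_le : ‖(incl : E →L[ℝ] S × A × E)‖ ≤ 1 := by
  refine ContinuousLinearMap.opNorm_le_bound _ zero_le_one (fun v => ?_)
  simp [incl, Prod.norm_def, ContinuousLinearMap.prod_apply, norm_nonneg]

lemma hasFDerivAt_incl (s : S) (a : A) (x : E) :
    HasFDerivAt (fun c' : E => (s, a, c')) (incl : E →L[ℝ] S × A × E) x :=
  HasFDerivAt.prodMk (hasFDerivAt_const s x) (HasFDerivAt.prodMk (hasFDerivAt_const a x) (hasFDerivAt_id x))

variable {C : Set E}

lemma mem_U (s : S) (a : A) {x : E} (hx : x ∈ C) :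
    ((s, a, x) : S × A × E) ∈ (Set.univ ×ˢ Set.univ ×ˢ C : Set (S × A × E)) := by
  simp [hx]

lemma isOpen_U (hC : IsOpen C) :
    IsOpen (Set.univ ×ˢ Set.univ ×ˢ C : Set (S × A × E)) :=
  isOpen_univ.prod (isOpen_univ.prod hC)

lemma convex_U (hC : Convex ℝ C) :
    Convex ℝ (Set.univ ×ˢ Set.univ ×ˢ C : Set (S × A × E)) :=
  convex_univ.prod (convex_univ.prod hC)

lemma hasFDerivAt_partial (hC : IsOpen C) {g : S × A × E → F}
    (hg : ContDiffOn ℝ 2 g (Set.univ ×ˢ Set.univ ×ˢ C)) (s : S) (a : A) {x : E} (hx : x ∈ C) :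
    HasFDerivAt (fun c' : E => g (s, a, c'))
      ((fderiv ℝ g (s, a, x)).comp (incl : E →L[ℝ] S × A × E)) x := by
  have hd : DifferentiableAt ℝ g (s, a, x) :=
    (hg.differentiableOn (by norm_num)).differentiableAt
      ((isOpen_U hC).mem_nhds (mem_U s a hx))
  exact hd.hasFDerivAt.comp x (hasFDerivAt_incl s a x)

/-- second-derivative bound gives a Lipschitz estimate for the derivative in `c`. -/
lemma fderiv_lip (hC : IsOpen C) (hCc : Convex ℝ C) {g : S × A × E → F}
    (hg : ContDiffOn ℝ 2 g (Set.univ ×ˢ Set.univ ×ˢ C)) {M₂ : ℝ}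
    (hM₂ : ∀ p ∈ (Set.univ ×ˢ Set.univ ×ˢ C : Set (S × A × E)),
      ‖fderiv ℝ (fderiv ℝ g) p‖ ≤ M₂)
    (s : S) (a : A) {x y : E} (hx : x ∈ C) (hy : y ∈ C) :
    ‖fderiv ℝ g (s, a, x) - fderiv ℝ g (s, a, y)‖ ≤ M₂ * ‖x - y‖ := by
  have hdg : DifferentiableOn ℝ (fderiv ℝ g) (Set.univ ×ˢ Set.univ ×ˢ C) :=
    (hg.fderiv_of_isOpen (isOpen_U hC)
      (show (1:WithTop ℕ∞) + 1 ≤ 2 by norm_num)).differentiableOn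
      (by norm_num)
  have key : ∀ z ∈ C, HasFDerivWithinAt (fun x : E => fderiv ℝ g (s, a, x))
      ((fderiv ℝ (fderiv ℝ g) (s, a, z)).comp (incl : E →L[ℝ] S × A × E)) C z := by
    intro z hz
    have hd : DifferentiableAt ℝ (fderiv ℝ g) (s, a, z) :=
      hdg.differentiableAt ((isOpen_U hC).mem_nhds (mem_U s a hz))
    exact (hd.hasFDerivAt.comp z (hasFDerivAt_incl s a z)).hasFDerivWithinAt
  have bound : ∀ z ∈ C,
      ‖(fderiv ℝ (fderiv ℝ g) (s, a, z)).comp (incl : E →L[ℝ] S × A × E)‖ ≤ M₂ := by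
    intro z hz
    calc ‖(fderiv ℝ (fderiv ℝ g) (s, a, z)).comp (incl : E →L[ℝ] S × A × E)‖
        ≤ ‖fderiv ℝ (fderiv ℝ g) (s, a, z)‖ * ‖(incl : E →L[ℝ] S × A × E)‖ :=
          ContinuousLinearMap.opNorm_comp_le _ _
      _ ≤ M₂ * 1 := by
          have h1 := hM₂ _ (mem_U s a hz)
          have h2 : (0:ℝ) ≤ ‖fderiv ℝ (fderiv ℝ g) (s, a, z)‖ := ContinuousLinearMap.opNorm_nonneg _
          exact mul_le_mul h1 incl_norm_le (norm_nonneg _) (le_trans h2 h1)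
      _ = M₂ := mul_one _
  exact hCc.norm_image_sub_le_of_norm_hasFDerivWithin_le key bound hy hx

/-- Taylor first-order bound in the context variable. -/
lemma taylor_bound (hC : IsOpen C) (hCc : Convex ℝ C) {g : S × A × E → F}
    (hg : ContDiffOn ℝ 2 g (Set.univ ×ˢ Set.univ ×ˢ C)) {M₂ : ℝ}
    (hM₂ : ∀ p ∈ (Set.univ ×ˢ Set.univ ×ˢ C : Set (S × A × E)),
      ‖fderiv ℝ (fderiv ℝ g) p‖ ≤ M₂)
    (s : S) (a : A) {c₀ c : E} (hc₀ : c₀ ∈ C) (hc : c ∈ C) :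
    ‖g (s, a, c) - g (s, a, c₀) - fderiv ℝ (fun c' => g (s, a, c')) c₀ (c - c₀)‖
      ≤ M₂ * ‖c - c₀‖ ^ 2 := by
  have hDc₀ := hasFDerivAt_partial hC hg s a hc₀
  rw [hDc₀.fderiv]
  set T : E →L[ℝ] F := (fderiv ℝ g (s, a, c₀)).comp (incl : E →L[ℝ] S × A × E) with hT
  have hseg : segment ℝ c₀ c ⊆ C := hCc.segment_subset hc₀ hc
  have hmemseg : ∀ x ∈ segment ℝ c₀ c, ‖x - c₀‖ ≤ ‖c - c₀‖ := by
    rintro x ⟨t, u, ht, hu, htu, rfl⟩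
    have ht' : t = 1 - u := by linarith
    have heq : t • c₀ + u • c - c₀ = u • (c - c₀) := by
      rw [ht', sub_smul, one_smul, smul_sub]; abel
    rw [heq, norm_smul, Real.norm_eq_abs, abs_of_nonneg hu]
    exact mul_le_of_le_one_left (norm_nonneg _) (by linarith)
  have key : ∀ x ∈ segment ℝ c₀ c, HasFDerivWithinAt (fun x : E => g (s, a, x) - T x)
      (((fderiv ℝ g (s, a, x)).comp (incl : E →L[ℝ] S × A × E)) - T) (segment ℝ c₀ c) x := by
    intro x hx
    exact ((hasFDerivAt_partial hC hg s a (hseg hx)).sub (T.hasFDerivAt)).hasFDerivWithinAt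
  have bound : ∀ x ∈ segment ℝ c₀ c,
      ‖((fderiv ℝ g (s, a, x)).comp (incl : E →L[ℝ] S × A × E)) - T‖ ≤ M₂ * ‖c - c₀‖ := by
    intro x hx
    have heq2 : ((fderiv ℝ g (s, a, x)).comp (incl : E →L[ℝ] S × A × E)) - T
        = (fderiv ℝ g (s, a, x) - fderiv ℝ g (s, a, c₀)).comp (incl : E →L[ℝ] S × A × E) := by
      rw [hT, ContinuousLinearMap.sub_comp]
    rw [heq2]
    calc ‖(fderiv ℝ g (s, a, x) - fderiv ℝ g (s, a, c₀)).comp (incl : E →L[ℝ] S × A × E)‖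
        ≤ ‖fderiv ℝ g (s, a, x) - fderiv ℝ g (s, a, c₀)‖ * ‖(incl : E →L[ℝ] S × A × E)‖ :=
          ContinuousLinearMap.opNorm_comp_le _ _
      _ ≤ ‖fderiv ℝ g (s, a, x) - fderiv ℝ g (s, a, c₀)‖ * 1 :=
          mul_le_mul_of_nonneg_left incl_norm_le (norm_nonneg _)
      _ = ‖fderiv ℝ g (s, a, x) - fderiv ℝ g (s, a, c₀)‖ := mul_one _
      _ ≤ M₂ * ‖x - c₀‖ := fderiv_lip hC hCc hg hM₂ s a (hseg hx) hc₀
      _ ≤ M₂ * ‖c - c₀‖ := by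
          have hM₂0 : (0:ℝ) ≤ M₂ := le_trans (ContinuousLinearMap.opNorm_nonneg _) (hM₂ _ (mem_U s a hc₀))
          exact mul_le_mul_of_nonneg_left (hmemseg x hx) hM₂0
  have hmv := (convex_segment c₀ c).norm_image_sub_le_of_norm_hasFDerivWithin_le key bound
    (left_mem_segment ℝ c₀ c) (right_mem_segment ℝ c₀ c)
  have heq : g (s, a, c) - T c - (g (s, a, c₀) - T c₀)
      = g (s, a, c) - g (s, a, c₀) - T (c - c₀) := by
    rw [map_sub]; abel
  rw [heq] at hmv
  calc ‖g (s, a, c) - g (s, a, c₀) - T (c - c₀)‖ ≤ M₂ * ‖c - c₀‖ * ‖c - c₀‖ := hmv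
    _ = M₂ * ‖c - c₀‖ ^ 2 := by ring

/-- Lipschitz in `(s,a)` at a fixed context. -/
lemma lip_sa (hC : IsOpen C) (hCc : Convex ℝ C) {g : S × A × E → F}
    (hg : ContDiffOn ℝ 2 g (Set.univ ×ˢ Set.univ ×ˢ C)) {M₁ : ℝ}
    (hM₁ : ∀ p ∈ (Set.univ ×ˢ Set.univ ×ˢ C : Set (S × A × E)), ‖fderiv ℝ g p‖ ≤ M₁)
    {x : E} (hx : x ∈ C) (p p' : S × A) :
    ‖g (p.1, p.2, x) - g (p'.1, p'.2, x)‖ ≤ M₁ * ‖p - p'‖ := by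
  have key : ∀ q ∈ (Set.univ ×ˢ Set.univ ×ˢ C : Set (S × A × E)),
      HasFDerivWithinAt g (fderiv ℝ g q) (Set.univ ×ˢ Set.univ ×ˢ C) q := by
    intro q hq
    exact ((hg.differentiableOn (by norm_num)).differentiableAt
      ((isOpen_U hC).mem_nhds hq)).hasFDerivAt.hasFDerivWithinAt
  have hmv := (convex_U hCc).norm_image_sub_le_of_norm_hasFDerivWithin_le key hM₁
    (mem_U p'.1 p'.2 hx) (mem_U p.1 p.2 hx)
  have hnorm : ‖((p.1, p.2, x) : S × A × E) - (p'.1, p'.2, x)‖ = ‖p - p'‖ := by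
    show ‖((p.1 - p'.1, p.2 - p'.2, x - x) : S × A × E)‖ = _
    simp [Prod.norm_def, max_eq_left (norm_nonneg _)]
  rw [hnorm] at hmv
  exact hmv

end Aux

section MAux
variable {S A : Type*}
  [NormedAddCommGroup S] [NormedSpace ℝ S]
  [NormedAddCommGroup A] [NormedSpace ℝ A]
  [MeasurableSpace A] [BorelSpace A]

lemma abs_integral_le_of_prob {μ : Measure A} [IsProbabilityMeasure μ]
    {g : A → ℝ} {M : ℝ} (hb : ∀ a, |g a| ≤ M) :
    |∫ a, g a ∂μ| ≤ M := by
  have hle := norm_integral_le_of_norm_le_const (μ := μ) (f := g) (C := M)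
    (Filter.Eventually.of_forall (fun a => by simpa using hb a))
  simpa using hle

lemma integral_diff_le {Lπ : ℝ≥0} {π : S → Measure A}
    (hprob : ∀ s, IsProbabilityMeasure (π s)) (hlip : CouplingLipschitzWith Lπ π)
    {h : A → ℝ} (hmeas : Measurable h) {M K : ℝ} (hK : 0 ≤ K)
    (hbdd : ∀ a, |h a| ≤ M) (hhl : ∀ a b, |h a - h b| ≤ K * dist a b) (x₁ x₂ : S) :
    |∫ a, h a ∂π x₁ - ∫ a, h a ∂π x₂| ≤ K * ((Lπ : ℝ) * dist x₁ x₂) := by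
  obtain ⟨Γ, ⟨hΓprob, hΓ1, hΓ2⟩, hΓd⟩ := hlip x₁ x₂
  haveI := hΓprob
  have h1 : ∫ a, h a ∂π x₁ = ∫ q, h q.1 ∂Γ := by
    rw [← hΓ1, integral_map measurable_fst.aemeasurable hmeas.aestronglyMeasurable]
  have h2 : ∫ a, h a ∂π x₂ = ∫ q, h q.2 ∂Γ := by
    rw [← hΓ2, integral_map measurable_snd.aemeasurable hmeas.aestronglyMeasurable]
  have int1 : Integrable (fun q : A × A => h q.1) Γ :=
    (integrable_const M).mono' (hmeas.comp measurable_fst).aestronglyMeasurable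
      (Filter.Eventually.of_forall fun q => by simpa using hbdd q.1)
  have int2 : Integrable (fun q : A × A => h q.2) Γ :=
    (integrable_const M).mono' (hmeas.comp measurable_snd).aestronglyMeasurable
      (Filter.Eventually.of_forall fun q => by simpa using hbdd q.2)
  rw [h1, h2, ← integral_sub int1 int2]
  have step1 : |∫ q, (h q.1 - h q.2) ∂Γ| ≤ ∫ q, |h q.1 - h q.2| ∂Γ := by
    simpa [Real.norm_eq_abs] using
      norm_integral_le_integral_norm (μ := Γ) (f := fun q : A × A => h q.1 - h q.2)
  have meas_diff : AEStronglyMeasurable (fun q : A × A => |h q.1 - h q.2|) Γ :=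
    (((hmeas.comp measurable_fst).sub (hmeas.comp measurable_snd)).abs).aestronglyMeasurable
  have step2 : ∫ q, |h q.1 - h q.2| ∂Γ
      = (∫⁻ q, ENNReal.ofReal |h q.1 - h q.2| ∂Γ).toReal := by
    rw [integral_eq_lintegral_of_nonneg_ae (Filter.Eventually.of_forall fun q => abs_nonneg _)
      meas_diff]
  have step3 : ∫⁻ q, ENNReal.ofReal |h q.1 - h q.2| ∂Γ
      ≤ ENNReal.ofReal K * ((Lπ : ℝ≥0∞) * edist x₁ x₂) := by
    have mono : ∫⁻ q, ENNReal.ofReal |h q.1 - h q.2| ∂Γ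
        ≤ ∫⁻ q, ENNReal.ofReal K * edist q.1 q.2 ∂Γ := by
      refine lintegral_mono fun q => ?_
      rw [edist_dist, ← ENNReal.ofReal_mul hK]
      exact ENNReal.ofReal_le_ofReal (hhl q.1 q.2)
    calc ∫⁻ q, ENNReal.ofReal |h q.1 - h q.2| ∂Γ
        ≤ ∫⁻ q, ENNReal.ofReal K * edist q.1 q.2 ∂Γ := mono
      _ = ENNReal.ofReal K * ∫⁻ q, edist q.1 q.2 ∂Γ :=
          lintegral_const_mul' _ _ ENNReal.ofReal_ne_top
      _ ≤ ENNReal.ofReal K * ((Lπ : ℝ≥0∞) * edist x₁ x₂) :=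
          mul_le_mul_right hΓd _
  have hfin : ENNReal.ofReal K * ((Lπ : ℝ≥0∞) * edist x₁ x₂) ≠ ⊤ :=
    ENNReal.mul_ne_top ENNReal.ofReal_ne_top
      (ENNReal.mul_ne_top ENNReal.coe_ne_top (edist_ne_top x₁ x₂))
  calc |∫ q, (h q.1 - h q.2) ∂Γ| ≤ ∫ q, |h q.1 - h q.2| ∂Γ := step1
    _ = (∫⁻ q, ENNReal.ofReal |h q.1 - h q.2| ∂Γ).toReal := step2
    _ ≤ (ENNReal.ofReal K * ((Lπ : ℝ≥0∞) * edist x₁ x₂)).toReal :=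
        ENNReal.toReal_mono hfin step3
    _ = K * ((Lπ : ℝ) * dist x₁ x₂) := by
        rw [ENNReal.toReal_mul, ENNReal.toReal_mul, ENNReal.toReal_ofReal hK,
          ENNReal.coe_toReal, ← dist_edist]

/-- difference of the `π`-integrals of a Lipschitz bounded function at two states. -/
lemma pi_integral_diff_le {Lπ : ℝ≥0} {π : S → Measure A}
    (hprob : ∀ s, IsProbabilityMeasure (π s)) (hlip : CouplingLipschitzWith Lπ π)
    {Q' : S × A → ℝ} (hc : Continuous Q') {M K : ℝ} (hK : 0 ≤ K)
    (hb : ∀ p, |Q' p| ≤ M) (hl : ∀ p p', |Q' p - Q' p'| ≤ K * ‖p - p'‖) (x₁ x₂ : S) :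
    |∫ a, Q' (x₁, a) ∂π x₁ - ∫ a, Q' (x₂, a) ∂π x₂| ≤ K * (1 + (Lπ : ℝ)) * dist x₁ x₂ := by
  haveI := hprob x₁
  haveI := hprob x₂
  have hnorm1 : ∀ a : A, |Q' (x₁, a) - Q' (x₂, a)| ≤ K * dist x₁ x₂ := by
    intro a
    have hll := hl (x₁, a) (x₂, a)
    have hn : ‖((x₁, a) : S × A) - (x₂, a)‖ = dist x₁ x₂ := by
      show ‖((x₁ - x₂, a - a) : S × A)‖ = _
      simp [Prod.norm_def, max_eq_left (norm_nonneg _), dist_eq_norm]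
    rwa [hn] at hll
  have cont2 : ∀ x : S, Continuous (fun a : A => Q' (x, a)) := by
    intro x; exact hc.comp (Continuous.prodMk_right x)
  have int1 : Integrable (fun a => Q' (x₁, a)) (π x₁) :=
    (integrable_const M).mono' ((cont2 x₁).measurable).aestronglyMeasurable
      (Filter.Eventually.of_forall fun a => by simpa using hb (x₁, a))
  have int2 : Integrable (fun a => Q' (x₂, a)) (π x₁) :=
    (integrable_const M).mono' ((cont2 x₂).measurable).aestronglyMeasurable
      (Filter.Eventually.of_forall fun a => by simpa using hb (x₂, a))
  have term1 : |∫ a, Q' (x₁, a) ∂π x₁ - ∫ a, Q' (x₂, a) ∂π x₁| ≤ K * dist x₁ x₂ := by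
    rw [← integral_sub int1 int2]
    exact abs_integral_le_of_prob (fun a => hnorm1 a)
  have term2 : |∫ a, Q' (x₂, a) ∂π x₁ - ∫ a, Q' (x₂, a) ∂π x₂|
      ≤ K * ((Lπ : ℝ) * dist x₁ x₂) := by
    refine integral_diff_le hprob hlip ((cont2 x₂).measurable) hK
      (fun a => hb (x₂, a)) (fun a b => ?_) x₁ x₂
    have hll := hl (x₂, a) (x₂, b)
    have hn : ‖((x₂, a) : S × A) - (x₂, b)‖ = dist a b := by
      show ‖((x₂ - x₂, a - b) : S × A)‖ = _
      simp [Prod.norm_def, max_eq_right (norm_nonneg _), dist_eq_norm]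
    rwa [hn] at hll
  calc |∫ a, Q' (x₁, a) ∂π x₁ - ∫ a, Q' (x₂, a) ∂π x₂|
      ≤ |∫ a, Q' (x₁, a) ∂π x₁ - ∫ a, Q' (x₂, a) ∂π x₁|
        + |∫ a, Q' (x₂, a) ∂π x₁ - ∫ a, Q' (x₂, a) ∂π x₂| := abs_sub_le _ _ _
    _ ≤ K * dist x₁ x₂ + K * ((Lπ : ℝ) * dist x₁ x₂) := add_le_add term1 term2
    _ = K * (1 + (Lπ : ℝ)) * dist x₁ x₂ := by ring

end MAux
/-- **Theorem 2 (the deterministic CEBE is first-order accurate).** Let `S, A, E` be real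
Banach spaces, `C ⊆ E` open convex, `γ ∈ (0,1)`. Let the next-state function
`f : S × A × C → S` and reward `R : S × A × C → ℝ` be C² with the stated uniform bounds on
`R` and on the first and second Fréchet derivatives over `S × A × C`, and let
`π : S → 𝒫(A)` be coupling-Lipschitz with constant `L_π`. Fix `c₀, c ∈ C` with
`γ(‖Df‖_∞ + ‖D²f‖_∞‖c−c₀‖)(1+L_π) < 1`. If `Q` is a bounded Lipschitz solution of the
Bellman equation at context `c`, and `Q_ce` a bounded Lipschitz solution of the
context-enhanced Bellman equation (with `f`, `R` linearized in the context about `c₀`),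
then `sup |Q_ce − Q|` is bounded by the stated `O(‖c−c₀‖²)` quantity. -/
theorem stmt7 {S A E : Type*}
    [NormedAddCommGroup S] [NormedSpace ℝ S] [CompleteSpace S]
    [MeasurableSpace S] [BorelSpace S]
    [NormedAddCommGroup A] [NormedSpace ℝ A] [CompleteSpace A]
    [MeasurableSpace A] [BorelSpace A]
    [NormedAddCommGroup E] [NormedSpace ℝ E] [CompleteSpace E]
    (C : Set E) (hC_open : IsOpen C) (hC_conv : Convex ℝ C)
    (γ : ℝ) (hγ0 : 0 < γ) (hγ1 : γ < 1)
    (f : S × A × E → S) (R : S × A × E → ℝ)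
    (Mf₁ Mf₂ MR MR₁ MR₂ Lπ : ℝ≥0)
    (hf : ContDiffOn ℝ 2 f (Set.univ ×ˢ Set.univ ×ˢ C))
    (hDf : ∀ p ∈ (Set.univ ×ˢ Set.univ ×ˢ C : Set (S × A × E)), ‖fderiv ℝ f p‖ ≤ Mf₁)
    (hD2f : ∀ p ∈ (Set.univ ×ˢ Set.univ ×ˢ C : Set (S × A × E)),
      ‖fderiv ℝ (fderiv ℝ f) p‖ ≤ Mf₂)
    (hR : ContDiffOn ℝ 2 R (Set.univ ×ˢ Set.univ ×ˢ C))
    (hR_bdd : ∀ p ∈ (Set.univ ×ˢ Set.univ ×ˢ C : Set (S × A × E)), |R p| ≤ MR)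
    (hDR : ∀ p ∈ (Set.univ ×ˢ Set.univ ×ˢ C : Set (S × A × E)), ‖fderiv ℝ R p‖ ≤ MR₁)
    (hD2R : ∀ p ∈ (Set.univ ×ˢ Set.univ ×ˢ C : Set (S × A × E)),
      ‖fderiv ℝ (fderiv ℝ R) p‖ ≤ MR₂)
    (π : S → Measure A) (hπ_prob : ∀ s, IsProbabilityMeasure (π s))
    (hπ_lip : CouplingLipschitzWith Lπ π)
    (c₀ c : E) (hc₀ : c₀ ∈ C) (hc : c ∈ C)
    (hγ_small : γ * ((Mf₁ : ℝ) + (Mf₂ : ℝ) * ‖c - c₀‖) * (1 + (Lπ : ℝ)) < 1)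
    (Q Qce : S × A → ℝ)
    (hQ_bdd : ∃ M, ∀ q, |Q q| ≤ M) (hQ_lip : ∃ K : ℝ≥0, LipschitzWith K Q)
    (hQ_bell : ∀ p : S × A, Q p = R (p.1, p.2, c) +
      γ * ∫ a', Q (f (p.1, p.2, c), a') ∂π (f (p.1, p.2, c)))
    (hQce_bdd : ∃ M, ∀ q, |Qce q| ≤ M) (hQce_lip : ∃ K : ℝ≥0, LipschitzWith K Qce)
    (hQce_bell : ∀ p : S × A, Qce p =
      (R (p.1, p.2, c₀) + fderiv ℝ (fun c' => R (p.1, p.2, c')) c₀ (c - c₀)) +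
      γ * ∫ a',
        Qce (f (p.1, p.2, c₀) + fderiv ℝ (fun c' => f (p.1, p.2, c')) c₀ (c - c₀), a')
        ∂π (f (p.1, p.2, c₀) + fderiv ℝ (fun c' => f (p.1, p.2, c')) c₀ (c - c₀))) :
    ∀ p : S × A, |Qce p - Q p| ≤
      (‖c - c₀‖ ^ 2 / (1 - γ)) *
        ((MR₂ : ℝ) + γ * (1 + (Lπ : ℝ)) * (Mf₂ : ℝ) * ((MR : ℝ) + (MR₁ : ℝ)) /
          (1 - γ * max 1 ((Mf₁ : ℝ) * (1 + (Lπ : ℝ))))) := by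
  obtain ⟨Mq, hMq⟩ := hQ_bdd
  obtain ⟨Mce, hMce⟩ := hQce_bdd
  obtain ⟨K₀, hK₀⟩ := hQ_lip
  obtain ⟨Kce, hKce⟩ := hQce_lip
  have hγ0' : (0:ℝ) ≤ γ := le_of_lt hγ0
  have hLπ0 : (0:ℝ) ≤ (Lπ : ℝ) := Lπ.coe_nonneg
  have h1Lπ : (0:ℝ) < 1 + (Lπ : ℝ) := by linarith
  set θ : ℝ := γ * (Mf₁ : ℝ) * (1 + (Lπ : ℝ)) with hθdef
  have hθ0 : 0 ≤ θ := by positivity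
  have hθ1 : θ < 1 := by
    have h0 : (0:ℝ) ≤ γ * ((Mf₂ : ℝ) * ‖c - c₀‖) * (1 + (Lπ : ℝ)) := by positivity
    nlinarith [hγ_small, h0]
  have h1θ : (0:ℝ) < 1 - θ := by linarith
  set Kq : ℝ := (MR₁ : ℝ) / (1 - θ) with hKqdef
  have hKq0 : 0 ≤ Kq := div_nonneg MR₁.coe_nonneg (le_of_lt h1θ)
  have hQcont : Continuous Q := hK₀.continuous
  have hQcecont : Continuous Qce := hKce.continuous
  -- induction step for the Lipschitz bound on Q
  have hstep : ∀ K : ℝ, 0 ≤ K → (∀ p p' : S × A, |Q p - Q p'| ≤ K * ‖p - p'‖) →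
      ∀ p p' : S × A, |Q p - Q p'| ≤ ((MR₁ : ℝ) + θ * K) * ‖p - p'‖ := by
    intro K hK hind p p'
    have hRlip : |R (p.1, p.2, c) - R (p'.1, p'.2, c)| ≤ (MR₁ : ℝ) * ‖p - p'‖ := by
      simpa [Real.norm_eq_abs] using lip_sa hC_open hC_conv hR hDR hc p p'
    have hI : |(∫ a, Q (f (p.1, p.2, c), a) ∂π (f (p.1, p.2, c)))
        - ∫ a, Q (f (p'.1, p'.2, c), a) ∂π (f (p'.1, p'.2, c))|
        ≤ K * (1 + (Lπ : ℝ)) * dist (f (p.1, p.2, c)) (f (p'.1, p'.2, c)) :=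
      pi_integral_diff_le hπ_prob hπ_lip hQcont hK hMq hind _ _
    have hdist : dist (f (p.1, p.2, c)) (f (p'.1, p'.2, c)) ≤ (Mf₁ : ℝ) * ‖p - p'‖ := by
      rw [dist_eq_norm]
      exact lip_sa hC_open hC_conv hf hDf hc p p'
    have hI2 : |(∫ a, Q (f (p.1, p.2, c), a) ∂π (f (p.1, p.2, c)))
        - ∫ a, Q (f (p'.1, p'.2, c), a) ∂π (f (p'.1, p'.2, c))|
        ≤ K * (1 + (Lπ : ℝ)) * ((Mf₁ : ℝ) * ‖p - p'‖) :=
      le_trans hI (mul_le_mul_of_nonneg_left hdist (by positivity))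
    rw [hQ_bell p, hQ_bell p']
    calc |R (p.1, p.2, c) + γ * ∫ a', Q (f (p.1, p.2, c), a') ∂π (f (p.1, p.2, c))
          - (R (p'.1, p'.2, c) + γ * ∫ a', Q (f (p'.1, p'.2, c), a') ∂π (f (p'.1, p'.2, c)))|
        ≤ |R (p.1, p.2, c) - R (p'.1, p'.2, c)|
          + |γ * ((∫ a', Q (f (p.1, p.2, c), a') ∂π (f (p.1, p.2, c)))
            - ∫ a', Q (f (p'.1, p'.2, c), a') ∂π (f (p'.1, p'.2, c)))| := by
          have : R (p.1, p.2, c) + γ * ∫ a', Q (f (p.1, p.2, c), a') ∂π (f (p.1, p.2, c))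
              - (R (p'.1, p'.2, c) + γ * ∫ a', Q (f (p'.1, p'.2, c), a') ∂π (f (p'.1, p'.2, c)))
              = (R (p.1, p.2, c) - R (p'.1, p'.2, c))
              + γ * ((∫ a', Q (f (p.1, p.2, c), a') ∂π (f (p.1, p.2, c)))
                - ∫ a', Q (f (p'.1, p'.2, c), a') ∂π (f (p'.1, p'.2, c))) := by ring
          rw [this]
          exact abs_add_le _ _
      _ ≤ (MR₁ : ℝ) * ‖p - p'‖ + γ * (K * (1 + (Lπ : ℝ)) * ((Mf₁ : ℝ) * ‖p - p'‖)) := by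
          refine add_le_add hRlip ?_
          rw [abs_mul, abs_of_pos hγ0]
          exact mul_le_mul_of_nonneg_left hI2 hγ0'
      _ = ((MR₁ : ℝ) + θ * K) * ‖p - p'‖ := by rw [hθdef]; ring
  -- the refined Lipschitz bound for Q
  have hQlipKq : ∀ p p' : S × A, |Q p - Q p'| ≤ Kq * ‖p - p'‖ := by
    have hKqid : Kq * (1 - θ) = (MR₁ : ℝ) := by
      rw [hKqdef]; field_simp
    set Kseq : ℕ → ℝ := fun n => Kq + θ ^ n * ((K₀ : ℝ) - Kq) with hKseq
    have hrec : ∀ n, Kseq (n + 1) = (MR₁ : ℝ) + θ * Kseq n := by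
      intro n
      simp only [hKseq]
      rw [pow_succ]
      linear_combination hKqid
    have hbase : ∀ p p' : S × A, |Q p - Q p'| ≤ Kseq 0 * ‖p - p'‖ := by
      intro p p'
      have := hK₀.dist_le_mul p p'
      rw [Real.dist_eq, dist_eq_norm] at this
      calc |Q p - Q p'| ≤ (K₀ : ℝ) * ‖p - p'‖ := this
        _ = Kseq 0 * ‖p - p'‖ := by simp [hKseq]
    have hind : ∀ n, (0 ≤ Kseq n) ∧ ∀ p p' : S × A, |Q p - Q p'| ≤ Kseq n * ‖p - p'‖ := by
      intro n
      induction n with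
      | zero =>
        refine ⟨?_, hbase⟩
        have : Kseq 0 = (K₀ : ℝ) := by simp [hKseq]
        rw [this]; exact K₀.coe_nonneg
      | succ n ih =>
        obtain ⟨hn0, hnb⟩ := ih
        constructor
        · rw [hrec n]; positivity
        · intro p p'
          rw [hrec n]
          exact hstep (Kseq n) hn0 hnb p p'
    intro p p'
    have hlim : Filter.Tendsto (fun n => Kseq n * ‖p - p'‖) Filter.atTop
        (nhds (Kq * ‖p - p'‖)) := by
      have h1 : Filter.Tendsto Kseq Filter.atTop (nhds Kq) := by
        have h2 : Filter.Tendsto (fun n => θ ^ n * ((K₀ : ℝ) - Kq)) Filter.atTop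
            (nhds 0) := by
          simpa using
            (tendsto_pow_atTop_nhds_zero_of_lt_one hθ0 hθ1).mul_const ((K₀ : ℝ) - Kq)
        simpa using (tendsto_const_nhds (x := Kq)).add h2
      exact h1.mul_const _
    exact ge_of_tendsto' hlim (fun n => (hind n).2 p p')
  -- the sup of the difference
  set D : ℝ := ⨆ p : S × A, |Qce p - Q p| with hD
  have hbddD : BddAbove (Set.range fun p : S × A => |Qce p - Q p|) := by
    refine ⟨Mce + Mq, ?_⟩
    rintro _ ⟨p, rfl⟩
    calc |Qce p - Q p| ≤ |Qce p| + |Q p| := abs_sub _ _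
      _ ≤ Mce + Mq := add_le_add (hMce p) (hMq p)
  have hDle : ∀ p : S × A, |Qce p - Q p| ≤ D := fun p => le_ciSup hbddD p
  -- Taylor bounds
  have hRT : ∀ p : S × A,
      |R (p.1, p.2, c) - R (p.1, p.2, c₀) - fderiv ℝ (fun c' => R (p.1, p.2, c')) c₀ (c - c₀)|
        ≤ (MR₂ : ℝ) * ‖c - c₀‖ ^ 2 := by
    intro p
    simpa [Real.norm_eq_abs] using taylor_bound hC_open hC_conv hR hD2R p.1 p.2 hc₀ hc
  have hfT : ∀ p : S × A,
      ‖f (p.1, p.2, c) - f (p.1, p.2, c₀) - fderiv ℝ (fun c' => f (p.1, p.2, c')) c₀ (c - c₀)‖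
        ≤ (Mf₂ : ℝ) * ‖c - c₀‖ ^ 2 :=
    fun p => taylor_bound hC_open hC_conv hf hD2f p.1 p.2 hc₀ hc
  -- the key pointwise recursion bound
  have hkey : ∀ p : S × A, |Qce p - Q p|
      ≤ (MR₂ : ℝ) * ‖c - c₀‖ ^ 2
        + γ * (D + Kq * (1 + (Lπ : ℝ)) * ((Mf₂ : ℝ) * ‖c - c₀‖ ^ 2)) := by
    intro p
    set x : S := f (p.1, p.2, c) with hx
    set xce : S := f (p.1, p.2, c₀) + fderiv ℝ (fun c' => f (p.1, p.2, c')) c₀ (c - c₀)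
      with hxce
    haveI := hπ_prob xce
    -- reward part
    have hRpart : |(R (p.1, p.2, c₀) + fderiv ℝ (fun c' => R (p.1, p.2, c')) c₀ (c - c₀))
        - R (p.1, p.2, c)| ≤ (MR₂ : ℝ) * ‖c - c₀‖ ^ 2 := by
      have := hRT p
      rw [abs_sub_comm]
      convert this using 2
      ring
    -- distance between next states
    have hdx : dist xce x ≤ (Mf₂ : ℝ) * ‖c - c₀‖ ^ 2 := by
      rw [dist_eq_norm, norm_sub_rev]
      have := hfT p
      have heq : x - xce = f (p.1, p.2, c) - f (p.1, p.2, c₀)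
          - fderiv ℝ (fun c' => f (p.1, p.2, c')) c₀ (c - c₀) := by
        rw [hxce, hx]
        abel
      rw [heq]; exact this
    -- split the integral difference
    have intce : Integrable (fun a => Qce (xce, a)) (π xce) :=
      (integrable_const Mce).mono'
        ((hQcecont.comp (Continuous.prodMk_right xce)).measurable).aestronglyMeasurable
        (Filter.Eventually.of_forall fun a => by simpa using hMce (xce, a))
    have intq : Integrable (fun a => Q (xce, a)) (π xce) :=
      (integrable_const Mq).mono'
        ((hQcont.comp (Continuous.prodMk_right xce)).measurable).aestronglyMeasurable
        (Filter.Eventually.of_forall fun a => by simpa using hMq (xce, a))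
    have hA1 : |(∫ a, Qce (xce, a) ∂π xce) - ∫ a, Q (xce, a) ∂π xce| ≤ D := by
      rw [← integral_sub intce intq]
      exact abs_integral_le_of_prob (fun a => hDle (xce, a))
    have hA2 : |(∫ a, Q (xce, a) ∂π xce) - ∫ a, Q (x, a) ∂π x|
        ≤ Kq * (1 + (Lπ : ℝ)) * ((Mf₂ : ℝ) * ‖c - c₀‖ ^ 2) := by
      have := pi_integral_diff_le hπ_prob hπ_lip hQcont hKq0 hMq hQlipKq xce x
      exact le_trans this (mul_le_mul_of_nonneg_left hdx (by positivity))
    have hInt : |(∫ a, Qce (xce, a) ∂π xce) - ∫ a, Q (x, a) ∂π x|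
        ≤ D + Kq * (1 + (Lπ : ℝ)) * ((Mf₂ : ℝ) * ‖c - c₀‖ ^ 2) := by
      calc |(∫ a, Qce (xce, a) ∂π xce) - ∫ a, Q (x, a) ∂π x|
          ≤ |(∫ a, Qce (xce, a) ∂π xce) - ∫ a, Q (xce, a) ∂π xce|
            + |(∫ a, Q (xce, a) ∂π xce) - ∫ a, Q (x, a) ∂π x| := abs_sub_le _ _ _
        _ ≤ D + Kq * (1 + (Lπ : ℝ)) * ((Mf₂ : ℝ) * ‖c - c₀‖ ^ 2) := add_le_add hA1 hA2
    rw [hQce_bell p, hQ_bell p]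
    calc |(R (p.1, p.2, c₀) + fderiv ℝ (fun c' => R (p.1, p.2, c')) c₀ (c - c₀))
          + γ * (∫ a', Qce (xce, a') ∂π xce)
          - (R (p.1, p.2, c) + γ * ∫ a', Q (x, a') ∂π x)|
        ≤ |(R (p.1, p.2, c₀) + fderiv ℝ (fun c' => R (p.1, p.2, c')) c₀ (c - c₀))
            - R (p.1, p.2, c)|
          + |γ * ((∫ a', Qce (xce, a') ∂π xce) - ∫ a', Q (x, a') ∂π x)| := by
          have heq : (R (p.1, p.2, c₀) + fderiv ℝ (fun c' => R (p.1, p.2, c')) c₀ (c - c₀))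
              + γ * (∫ a', Qce (xce, a') ∂π xce)
              - (R (p.1, p.2, c) + γ * ∫ a', Q (x, a') ∂π x)
              = ((R (p.1, p.2, c₀) + fderiv ℝ (fun c' => R (p.1, p.2, c')) c₀ (c - c₀))
                - R (p.1, p.2, c))
                + γ * ((∫ a', Qce (xce, a') ∂π xce) - ∫ a', Q (x, a') ∂π x) := by ring
          rw [heq]
          exact abs_add_le _ _
      _ ≤ (MR₂ : ℝ) * ‖c - c₀‖ ^ 2
          + γ * (D + Kq * (1 + (Lπ : ℝ)) * ((Mf₂ : ℝ) * ‖c - c₀‖ ^ 2)) := by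
          refine add_le_add hRpart ?_
          rw [abs_mul, abs_of_pos hγ0]
          exact mul_le_mul_of_nonneg_left hInt hγ0'
  -- supremum bound
  have hDrec : D ≤ (MR₂ : ℝ) * ‖c - c₀‖ ^ 2
      + γ * (D + Kq * (1 + (Lπ : ℝ)) * ((Mf₂ : ℝ) * ‖c - c₀‖ ^ 2)) := by
    rw [hD]
    exact ciSup_le hkey
  have h1γ : (0:ℝ) < 1 - γ := by linarith
  -- comparing Kq with the constant in the statement
  set m : ℝ := max 1 ((Mf₁ : ℝ) * (1 + (Lπ : ℝ))) with hm
  have hD2pos : (0:ℝ) < 1 - γ * m := by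
    rcases le_or_gt 1 ((Mf₁ : ℝ) * (1 + (Lπ : ℝ))) with h | h
    · have : m = (Mf₁ : ℝ) * (1 + (Lπ : ℝ)) := max_eq_right h
      rw [this]
      have : γ * ((Mf₁ : ℝ) * (1 + (Lπ : ℝ))) = θ := by rw [hθdef]; ring
      rw [this]; linarith
    · have : m = 1 := max_eq_left (le_of_lt h)
      rw [this]; linarith
  have hD2le : 1 - γ * m ≤ 1 - θ := by
    have h1 : θ ≤ γ * m := by
      have : (Mf₁ : ℝ) * (1 + (Lπ : ℝ)) ≤ m := le_max_right _ _
      calc θ = γ * ((Mf₁ : ℝ) * (1 + (Lπ : ℝ))) := by rw [hθdef]; ring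
        _ ≤ γ * m := mul_le_mul_of_nonneg_left this hγ0'
    linarith
  have hKqB : Kq ≤ ((MR : ℝ) + (MR₁ : ℝ)) / (1 - γ * m) := by
    rw [hKqdef]
    exact div_le_div₀ (by positivity) (by linarith [MR.coe_nonneg]) hD2pos hD2le
  -- final chaining
  intro p
  have hDfinal : D ≤ (‖c - c₀‖ ^ 2 / (1 - γ))
      * ((MR₂ : ℝ) + γ * (1 + (Lπ : ℝ)) * (Mf₂ : ℝ) * Kq) := by
    rw [div_mul_eq_mul_div, le_div_iff₀ h1γ]
    nlinarith [hDrec]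
  have hmono : (‖c - c₀‖ ^ 2 / (1 - γ))
      * ((MR₂ : ℝ) + γ * (1 + (Lπ : ℝ)) * (Mf₂ : ℝ) * Kq)
      ≤ (‖c - c₀‖ ^ 2 / (1 - γ)) *
        ((MR₂ : ℝ) + γ * (1 + (Lπ : ℝ)) * (Mf₂ : ℝ) * ((MR : ℝ) + (MR₁ : ℝ)) /
          (1 - γ * m)) := by
    refine mul_le_mul_of_nonneg_left ?_ (by positivity)
    have hcoef : (0:ℝ) ≤ γ * (1 + (Lπ : ℝ)) * (Mf₂ : ℝ) := by positivity
    have h2 : γ * (1 + (Lπ : ℝ)) * (Mf₂ : ℝ) * Kq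
        ≤ γ * (1 + (Lπ : ℝ)) * (Mf₂ : ℝ) * (((MR : ℝ) + (MR₁ : ℝ)) / (1 - γ * m)) :=
      mul_le_mul_of_nonneg_left hKqB hcoef
    calc (MR₂ : ℝ) + γ * (1 + (Lπ : ℝ)) * (Mf₂ : ℝ) * Kq
        ≤ (MR₂ : ℝ) + γ * (1 + (Lπ : ℝ)) * (Mf₂ : ℝ) * (((MR : ℝ) + (MR₁ : ℝ)) / (1 - γ * m)) :=
          by linarith
      _ = (MR₂ : ℝ) + γ * (1 + (Lπ : ℝ)) * (Mf₂ : ℝ) * ((MR : ℝ) + (MR₁ : ℝ)) / (1 - γ * m) :=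
          by rw [mul_div_assoc]
  exact le_trans (hDle p) (le_trans hDfinal hmono)
end

section
/- Let S and A be measurable spaces, let 𝒫 be a set of policies (maps from S to probability measures on A) and 𝒫₀ ⊆ 𝒫 a subset (the L-Lipschitz policies), let μ be a probability measure on S, and for each π ∈ 𝒫 let Q_ce(π), Q_be(π) : S × A → ℝ be bounded measurable functions such that for each π and each i ∈ {ce, be} the function s ↦ ∫_A Q_i(π)(s,a) dπ(s)(a) is μ-integrable; define J_i(π) := ∫_S ∫_A Q_i(π)(s,a) dπ(s)(a) dμ(s). Suppose: (i) π_ce ∈ 𝒫₀ satisfies J_ce(π_ce) ≥ J_ce(ρ) − ε for all ρ ∈ 𝒫; (ii) there exists π_be ∈ 𝒫₀ with J_be(π_be) ≥ J_be(ρ) − ε for all ρ ∈ 𝒫; and (iii) sup_{(s,a)} |Q_ce(π)(s,a) − Q_be(π)(s,a)| < δ for all π ∈ 𝒫₀. Then J_be(π_ce) ≥ J_be(ρ) − 2δ − 2ε for all ρ ∈ 𝒫. -/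
open MeasureTheory

/-- **Theorem 4.** A policy that is `ε`-optimal for the CEBE return functional is
`(2δ+2ε)`-optimal for the Bellman-equation return functional, whenever the two Q-functions
are uniformly `δ`-close over all policies in `Pol₀` (the `L`-Lipschitz policies), an
`ε`-optimal Lipschitz policy for the BE exists, and the return functionals are
`J_i(π) = ∫_S ∫_A Q_i(π)(s,a) dπ(s)(a) dμ(s)`. -/
theorem stmt8 {S A : Type*} [MeasurableSpace S] [MeasurableSpace A]
    (Pol Pol₀ : Set (S → Measure A)) (h_sub : Pol₀ ⊆ Pol)
    (h_prob : ∀ π ∈ Pol, ∀ s, IsProbabilityMeasure (π s))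
    (μ : Measure S) [IsProbabilityMeasure μ]
    (Qce Qbe : (S → Measure A) → S × A → ℝ)
    (h_bdd : ∀ π ∈ Pol, (∃ M, ∀ p, |Qce π p| ≤ M) ∧ (∃ M, ∀ p, |Qbe π p| ≤ M))
    (h_meas : ∀ π ∈ Pol, Measurable (Qce π) ∧ Measurable (Qbe π))
    (h_int : ∀ π ∈ Pol,
      Integrable (fun s => ∫ a, Qce π (s, a) ∂π s) μ ∧
      Integrable (fun s => ∫ a, Qbe π (s, a) ∂π s) μ)
    (ε δ : ℝ)
    (πce : S → Measure A) (hπce : πce ∈ Pol₀)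
    (hce_opt : ∀ ρ ∈ Pol,
      (∫ s, ∫ a, Qce πce (s, a) ∂πce s ∂μ) ≥ (∫ s, ∫ a, Qce ρ (s, a) ∂ρ s ∂μ) - ε)
    (hbe_exists : ∃ πbe ∈ Pol₀, ∀ ρ ∈ Pol,
      (∫ s, ∫ a, Qbe πbe (s, a) ∂πbe s ∂μ) ≥ (∫ s, ∫ a, Qbe ρ (s, a) ∂ρ s ∂μ) - ε)
    (h_close : ∀ π ∈ Pol₀, (⨆ p : S × A, |Qce π p - Qbe π p|) < δ) :
    ∀ ρ ∈ Pol,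
      (∫ s, ∫ a, Qbe πce (s, a) ∂πce s ∂μ) ≥
        (∫ s, ∫ a, Qbe ρ (s, a) ∂ρ s ∂μ) - 2 * δ - 2 * ε := by
  intro ρ hρ
  obtain ⟨πbe, hπbe, hbe_opt⟩ := hbe_exists
  -- nonempty instances
  have hSne : Nonempty S := by
    by_contra h
    rw [not_nonempty_iff] at h
    have := measure_univ (μ := μ)
    rw [Set.univ_eq_empty_iff.mpr h, measure_empty] at this
    exact zero_ne_one this
  have hAne : Nonempty A := by
    by_contra h
    rw [not_nonempty_iff] at h
    obtain ⟨s⟩ := hSne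
    have := (h_prob ρ hρ s).measure_univ
    rw [Set.univ_eq_empty_iff.mpr h, measure_empty] at this
    exact zero_ne_one this
  -- key lemma: J_ce and J_be are δ-close on Pol₀
  have key : ∀ π ∈ Pol₀,
      |(∫ s, ∫ a, Qce π (s, a) ∂π s ∂μ) - (∫ s, ∫ a, Qbe π (s, a) ∂π s ∂μ)| ≤ δ := by
    intro π hπ0
    have hπ := h_sub hπ0
    obtain ⟨⟨Mc, hMc⟩, ⟨Mb, hMb⟩⟩ := h_bdd π hπ
    have hbdd : BddAbove (Set.range fun p : S × A => |Qce π p - Qbe π p|) := by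
      refine ⟨Mc + Mb, ?_⟩
      rintro x ⟨p, rfl⟩
      calc |Qce π p - Qbe π p| ≤ |Qce π p| + |Qbe π p| := abs_sub _ _
        _ ≤ Mc + Mb := add_le_add (hMc p) (hMb p)
    have hpt : ∀ p : S × A, |Qce π p - Qbe π p| ≤ δ := fun p =>
      le_of_lt (lt_of_le_of_lt (le_ciSup hbdd p) (h_close π hπ0))
    have hmc := (h_meas π hπ).1
    have hmb := (h_meas π hπ).2
    have hic : ∀ s, Integrable (fun a => Qce π (s, a)) (π s) := by
      intro s
      haveI := h_prob π hπ s
      exact (integrable_const Mc).mono'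
        ((hmc.comp measurable_prodMk_left).aestronglyMeasurable)
        (Filter.Eventually.of_forall fun a => by simpa using hMc (s, a))
    have hib : ∀ s, Integrable (fun a => Qbe π (s, a)) (π s) := by
      intro s
      haveI := h_prob π hπ s
      exact (integrable_const Mb).mono'
        ((hmb.comp measurable_prodMk_left).aestronglyMeasurable)
        (Filter.Eventually.of_forall fun a => by simpa using hMb (s, a))
    have hinner : ∀ s,
        |(∫ a, Qce π (s, a) ∂π s) - ∫ a, Qbe π (s, a) ∂π s| ≤ δ := by
      intro s
      haveI := h_prob π hπ s
      rw [← integral_sub (hic s) (hib s)]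
      have := norm_integral_le_of_norm_le_const
        (μ := π s) (f := fun a => Qce π (s, a) - Qbe π (s, a)) (C := δ)
        (Filter.Eventually.of_forall fun a => by simpa using hpt (s, a))
      simpa [Real.norm_eq_abs, measure_univ] using this
    rw [← integral_sub (h_int π hπ).1 (h_int π hπ).2]
    have := norm_integral_le_of_norm_le_const
      (μ := μ) (f := fun s => (∫ a, Qce π (s, a) ∂π s) - ∫ a, Qbe π (s, a) ∂π s) (C := δ)
      (Filter.Eventually.of_forall fun s => by simpa using hinner s)
    simpa [Real.norm_eq_abs, measure_univ] using this
  have h1 := key πce hπce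
  have h2 := key πbe hπbe
  have h3 := hce_opt πbe (h_sub hπbe)
  have h4 := hbe_opt ρ hρ
  have a1 := abs_le.mp h1
  have a2 := abs_le.mp h2
  linarith [a1.1, a1.2, a2.1, a2.2]
end

section
/- Let X be a measurable space and let μ be a finite signed measure on X with Jordan decomposition μ = μ⁺ − μ⁻. Suppose μ(X) = 1 and μ⁺(X) > 0. Then the total variation norm of the signed measure μ − (1/μ⁺(X))·μ⁺ satisfies ‖μ − (1/μ⁺(X))·μ⁺‖ ≤ 2·μ⁻(X). -/
open MeasureTheory
open scoped ENNReal NNReal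

lemma tv_le_of_sub {α : Type*} [MeasurableSpace α] (p n : Measure α)
    [IsFiniteMeasure p] [IsFiniteMeasure n] :
    (p.toSignedMeasure - n.toSignedMeasure).totalVariation Set.univ ≤
      p Set.univ + n Set.univ := by
  set s := p.toSignedMeasure - n.toSignedMeasure with hs
  obtain ⟨i, hi₁, hi₂, hi₃, hpos, hneg⟩ := s.toJordanDecomposition_spec
  rw [SignedMeasure.totalVariation, Measure.add_apply, hpos, hneg,
    SignedMeasure.toMeasureOfZeroLE_apply _ hi₂ hi₁ MeasurableSet.univ,
    SignedMeasure.toMeasureOfLEZero_apply _ hi₃ hi₁.compl MeasurableSet.univ]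
  have hsi : s (i ∩ Set.univ) ≤ (p Set.univ).toReal := by
    rw [hs, VectorMeasure.sub_apply,
      Measure.toSignedMeasure_apply_measurable (hi₁.inter MeasurableSet.univ),
      Measure.toSignedMeasure_apply_measurable (hi₁.inter MeasurableSet.univ)]
    have h1 : (p (i ∩ Set.univ)).toReal ≤ (p Set.univ).toReal :=
      ENNReal.toReal_mono (measure_ne_top _ _) (measure_mono (Set.subset_univ _))
    have h2 : (0:ℝ) ≤ (n (i ∩ Set.univ)).toReal := ENNReal.toReal_nonneg
    rw [measureReal_def, measureReal_def]
    linarith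
  have hsn : -s (iᶜ ∩ Set.univ) ≤ (n Set.univ).toReal := by
    rw [hs, VectorMeasure.sub_apply,
      Measure.toSignedMeasure_apply_measurable (hi₁.compl.inter MeasurableSet.univ),
      Measure.toSignedMeasure_apply_measurable (hi₁.compl.inter MeasurableSet.univ)]
    have h1 : (n (iᶜ ∩ Set.univ)).toReal ≤ (n Set.univ).toReal :=
      ENNReal.toReal_mono (measure_ne_top _ _) (measure_mono (Set.subset_univ _))
    have h2 : (0:ℝ) ≤ (p (iᶜ ∩ Set.univ)).toReal := ENNReal.toReal_nonneg
    rw [measureReal_def, measureReal_def]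
    linarith
  gcongr
  · rw [← ENNReal.ofReal_eq_coe_nnreal]
    exact ENNReal.ofReal_le_of_le_toReal hsi
  · rw [← ENNReal.ofReal_eq_coe_nnreal]
    exact ENNReal.ofReal_le_of_le_toReal hsn

lemma stmt9_aux {X : Type*} [MeasurableSpace X] (μ : SignedMeasure X) (p n : Measure X)
    [IsFiniteMeasure p] [IsFiniteMeasure n]
    (hμeq : μ = p.toSignedMeasure - n.toSignedMeasure)
    (hPN : (p Set.univ).toReal - (n Set.univ).toReal = 1)
    (h_pos : 0 < p Set.univ) :
    (μ - ((p Set.univ).toReal)⁻¹ • p.toSignedMeasure).totalVariation Set.univ ≤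
      2 * n Set.univ := by
  set P := (p Set.univ).toReal with hP
  set N := (n Set.univ).toReal with hN
  have hPtop : p Set.univ ≠ ⊤ := measure_ne_top _ _
  have hNtop : n Set.univ ≠ ⊤ := measure_ne_top _ _
  have hPpos : 0 < P := ENNReal.toReal_pos h_pos.ne' hPtop
  have hNnn : 0 ≤ N := ENNReal.toReal_nonneg
  have hc : 0 ≤ 1 - P⁻¹ := by
    rw [sub_nonneg, inv_le_one_iff₀]
    right; linarith
  have hkey : μ - P⁻¹ • p.toSignedMeasure =
      ((1 - P⁻¹).toNNReal • p).toSignedMeasure - n.toSignedMeasure := by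
    rw [Measure.toSignedMeasure_smul, NNReal.smul_def, Real.coe_toNNReal _ hc, hμeq,
      ]
    ext s hs
    simp [hs]
    ring
  rw [hkey]
  refine le_trans (tv_le_of_sub _ _) ?_
  have hsm : ((1 - P⁻¹).toNNReal • p) Set.univ = n Set.univ := by
    simp only [Measure.smul_apply, ENNReal.smul_def, smul_eq_mul]
    rw [show ((1 - P⁻¹).toNNReal : ℝ≥0∞) = ENNReal.ofReal (1 - P⁻¹) from rfl,
      ← ENNReal.ofReal_toReal hPtop,
      ← ENNReal.ofReal_mul hc, ← hP]
    have : (1 - P⁻¹) * P = N := by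
      field_simp
      linarith
    rw [this, hN, ENNReal.ofReal_toReal hNtop]
  rw [two_mul, hsm]

/-- **Lemma B.9.** Distance from a signed measure of total mass one to its simplex
projection: if `μ` is a finite signed measure with Jordan decomposition `μ = μ⁺ − μ⁻`,
`μ(X) = 1` and `μ⁺(X) > 0`, then the total variation norm of `μ − μ⁺/μ⁺(X)` is at most
`2·μ⁻(X)`. -/
theorem stmt9 {X : Type*} [MeasurableSpace X] (μ : SignedMeasure X)
    (h_one : μ Set.univ = 1)
    (h_pos : 0 < μ.toJordanDecomposition.posPart Set.univ) :
    (μ - ((μ.toJordanDecomposition.posPart Set.univ).toReal)⁻¹ •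
        μ.toJordanDecomposition.posPart.toSignedMeasure).totalVariation Set.univ ≤
      2 * μ.toJordanDecomposition.negPart Set.univ := by
  refine stmt9_aux μ μ.toJordanDecomposition.posPart μ.toJordanDecomposition.negPart ?_ ?_ h_pos
  · conv_lhs => rw [← μ.toSignedMeasure_toJordanDecomposition]
    rfl
  · rw [← μ.toSignedMeasure_toJordanDecomposition] at h_one
    rw [JordanDecomposition.toSignedMeasure, VectorMeasure.sub_apply,
      Measure.toSignedMeasure_apply_measurable MeasurableSet.univ,
      Measure.toSignedMeasure_apply_measurable MeasurableSet.univ] at h_one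
    exact h_one
end

section
/- Let X be a measurable space, let ν be a probability measure on X, let μ be a finite signed measure on X with μ(X) = 1 and total variation distance ‖ν − μ‖ ≤ ε for some real ε with 0 ≤ ε < 1 (where ν − μ is a difference of signed measures). Then, with μ = μ⁺ − μ⁻ the Jordan decomposition: (i) μ⁺(X) ≥ 1 − ε > 0; (ii) μ⁻(X) ≤ ε; and (iii) ‖ν − (1/μ⁺(X))·μ⁺‖ ≤ 3ε. -/
open MeasureTheory

private lemma jd_apply {X : Type*} [MeasurableSpace X] (s : SignedMeasure X) {A : Set X}
    (hA : MeasurableSet A) :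
    s A = (s.toJordanDecomposition.posPart A).toReal -
      (s.toJordanDecomposition.negPart A).toReal := by
  conv_lhs => rw [← s.toSignedMeasure_toJordanDecomposition]
  rw [JordanDecomposition.toSignedMeasure, VectorMeasure.sub_apply,
    Measure.toSignedMeasure_apply_measurable hA, Measure.toSignedMeasure_apply_measurable hA]
  rfl

private lemma pair_le_tv {X : Type*} [MeasurableSpace X] (s : SignedMeasure X) {A : Set X}
    (hA : MeasurableSet A) :
    s A - s Aᶜ ≤ (s.totalVariation Set.univ).toReal := by
  rw [jd_apply s hA, jd_apply s hA.compl, SignedMeasure.totalVariation, Measure.add_apply,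
    ENNReal.toReal_add (measure_ne_top _ _) (measure_ne_top _ _)]
  have h1 : (s.toJordanDecomposition.posPart A).toReal ≤
      (s.toJordanDecomposition.posPart Set.univ).toReal :=
    ENNReal.toReal_mono (measure_ne_top _ _) (measure_mono (Set.subset_univ _))
  have h2 : (s.toJordanDecomposition.negPart Aᶜ).toReal ≤
      (s.toJordanDecomposition.negPart Set.univ).toReal :=
    ENNReal.toReal_mono (measure_ne_top _ _) (measure_mono (Set.subset_univ _))
  have h3 : 0 ≤ (s.toJordanDecomposition.negPart A).toReal := ENNReal.toReal_nonneg
  have h4 : 0 ≤ (s.toJordanDecomposition.posPart Aᶜ).toReal := ENNReal.toReal_nonneg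
  linarith

private lemma tv_le_of_pair {X : Type*} [MeasurableSpace X] (s : SignedMeasure X) {c : ℝ}
    (h : ∀ A : Set X, MeasurableSet A → s A - s Aᶜ ≤ c) :
    s.totalVariation Set.univ ≤ ENNReal.ofReal c := by
  obtain ⟨i, hi₁, hi₂, hi₃, hp, hn⟩ := s.toJordanDecomposition_spec
  have hsi : 0 ≤ s i :=
    VectorMeasure.nonneg_of_zero_le_restrict s
      (VectorMeasure.zero_le_restrict_subset s hi₁ (subset_refl i) hi₂)
  have hsc : s iᶜ ≤ 0 :=
    VectorMeasure.nonpos_of_restrict_le_zero s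
      (VectorMeasure.restrict_le_zero_subset s hi₁.compl (subset_refl iᶜ) hi₃)
  have hpv : s.toJordanDecomposition.posPart Set.univ = ENNReal.ofReal (s i) := by
    rw [hp, SignedMeasure.toMeasureOfZeroLE_apply s hi₂ hi₁ MeasurableSet.univ,
      ENNReal.ofReal, ENNReal.coe_inj]
    ext
    simp [Real.coe_toNNReal _ hsi]
  have hnv : s.toJordanDecomposition.negPart Set.univ = ENNReal.ofReal (-s iᶜ) := by
    rw [hn, SignedMeasure.toMeasureOfLEZero_apply s hi₃ hi₁.compl MeasurableSet.univ,
      ENNReal.ofReal, ENNReal.coe_inj]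
    ext
    simp [Real.coe_toNNReal _ (by linarith : (0:ℝ) ≤ -s iᶜ)]
  rw [SignedMeasure.totalVariation, Measure.add_apply, hpv, hnv,
    ← ENNReal.ofReal_add hsi (by linarith)]
  exact ENNReal.ofReal_le_ofReal (by have := h i hi₁; linarith)

/-- **Measure-theoretic core of Lemma B.11.** If `ν` is a probability measure and `μ` a
finite signed measure with `μ(X) = 1` and total variation distance `‖ν − μ‖ ≤ ε` for some
`0 ≤ ε < 1`, then (with `μ = μ⁺ − μ⁻` the Jordan decomposition): (i) `μ⁺(X) ≥ 1 − ε > 0`;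
(ii) `μ⁻(X) ≤ ε`; and (iii) `‖ν − μ⁺/μ⁺(X)‖ ≤ 3ε`. -/
theorem stmt11 {X : Type*} [MeasurableSpace X]
    (ν : Measure X) [IsProbabilityMeasure ν]
    (μ : SignedMeasure X) (h_one : μ Set.univ = 1)
    (ε : ℝ) (hε0 : 0 ≤ ε) (hε1 : ε < 1)
    (h_close : (ν.toSignedMeasure - μ).totalVariation Set.univ ≤ ENNReal.ofReal ε) :
    ENNReal.ofReal (1 - ε) ≤ μ.toJordanDecomposition.posPart Set.univ ∧
    0 < μ.toJordanDecomposition.posPart Set.univ ∧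
    μ.toJordanDecomposition.negPart Set.univ ≤ ENNReal.ofReal ε ∧
    (ν.toSignedMeasure - ((μ.toJordanDecomposition.posPart Set.univ).toReal)⁻¹ •
        μ.toJordanDecomposition.posPart.toSignedMeasure).totalVariation Set.univ ≤
      ENNReal.ofReal (3 * ε) := by
  set p := μ.toJordanDecomposition.posPart with hpdef
  set n := μ.toJordanDecomposition.negPart with hndef
  have hμA : ∀ A : Set X, MeasurableSet A → μ A = (p A).toReal - (n A).toReal := by
    intro A hA; rw [jd_apply μ hA, ← hpdef, ← hndef]
  have hμu : (p Set.univ).toReal - (n Set.univ).toReal = 1 := by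
    rw [← hμA Set.univ MeasurableSet.univ]; exact h_one
  have key : ∀ A : Set X, MeasurableSet A →
      (ν.toSignedMeasure - μ) A - (ν.toSignedMeasure - μ) Aᶜ ≤ ε := by
    intro A hA
    calc _ ≤ ((ν.toSignedMeasure - μ).totalVariation Set.univ).toReal := pair_le_tv _ hA
    _ ≤ ε := by
      have := ENNReal.toReal_mono (by simp) h_close
      rwa [ENNReal.toReal_ofReal hε0] at this
  obtain ⟨i, hi₁, hi₂, hi₃, hp, hn⟩ := μ.toJordanDecomposition_spec
  rw [← hpdef] at hp; rw [← hndef] at hn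
  have hpA : ∀ A : Set X, (p A).toReal ≤ (p Set.univ).toReal :=
    fun A => ENNReal.toReal_mono (measure_ne_top _ _) (measure_mono (Set.subset_univ _))
  have hnA : ∀ A : Set X, (n A).toReal ≤ (n Set.univ).toReal :=
    fun A => ENNReal.toReal_mono (measure_ne_top _ _) (measure_mono (Set.subset_univ _))
  -- μ vanishes positively on iᶜ: p iᶜ = 0 and n iᶜ = n univ
  have hpic : p iᶜ = 0 := by
    rw [hp, SignedMeasure.toMeasureOfZeroLE_apply μ hi₂ hi₁ hi₁.compl]
    simp
  have hni : n i = 0 := by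
    rw [hn, SignedMeasure.toMeasureOfLEZero_apply μ hi₃ hi₁.compl hi₁]
    simp [Set.inter_comm]
  have hnic : n iᶜ = n Set.univ := by
    have h := measure_add_measure_compl (μ := n) hi₁
    rw [hni, zero_add] at h; exact h
  -- bound on negPart mass: (ii)
  have hνic : 0 ≤ ν.toSignedMeasure iᶜ := by
    rw [Measure.toSignedMeasure_apply_measurable hi₁.compl]; exact ENNReal.toReal_nonneg
  have hμic : μ iᶜ = -(n Set.univ).toReal := by
    rw [hμA iᶜ hi₁.compl, hpic, hnic]; simp
  have hii : (ν.toSignedMeasure - μ) iᶜ - (ν.toSignedMeasure - μ) iᶜᶜ ≤ ε := key iᶜ hi₁.compl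
  have hsub : ∀ A : Set X, (ν.toSignedMeasure - μ) A = ν.toSignedMeasure A - μ A := by
    intro A; rw [VectorMeasure.sub_apply]
  have hpairdiff : (ν.toSignedMeasure - μ) iᶜᶜ ≤ 1 - (p Set.univ).toReal := by
    rw [hsub, compl_compl, Measure.toSignedMeasure_apply_measurable hi₁]
    have h1 : (ν i).toReal ≤ (ν Set.univ).toReal :=
      ENNReal.toReal_mono (measure_ne_top _ _) (measure_mono (Set.subset_univ _))
    have h2 : (ν Set.univ).toReal = 1 := by simp
    have h3 : μ i = (p i).toReal - (n i).toReal := hμA i hi₁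
    have h4 : (p i).toReal ≤ (p Set.univ).toReal := hpA i
    rw [hni] at h3
    simp only [ENNReal.toReal_zero, sub_zero] at h3
    have h5 : μ i = (p Set.univ).toReal - 0 := by
      have hpi : p i = p Set.univ := by
        have h := measure_add_measure_compl (μ := p) hi₁
        rw [hpic, add_zero] at h; exact h
      rw [h3, hpi]; ring
    simp only [Measure.real]
    linarith
  have hnle : (n Set.univ).toReal ≤ ε := by
    have h6 : (ν.toSignedMeasure - μ) iᶜ = ν.toSignedMeasure iᶜ + (n Set.univ).toReal := by
      rw [hsub, hμic]; ring
    have := hii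
    rw [h6] at this
    -- ν iᶜ + n - X ≤ ε with X ≤ 1 - p = -n, so 2n ≤ ε
    linarith [hpairdiff, ENNReal.toReal_nonneg (a := n Set.univ)]
  have hp1 : 1 ≤ (p Set.univ).toReal := by
    nlinarith [ENNReal.toReal_nonneg (a := n Set.univ)]
  refine ⟨?_, ?_, ?_, ?_⟩
  · calc ENNReal.ofReal (1 - ε) ≤ ENNReal.ofReal ((p Set.univ).toReal) :=
        ENNReal.ofReal_le_ofReal (by linarith)
    _ = p Set.univ := ENNReal.ofReal_toReal (measure_ne_top _ _)
  · have : (0 : ℝ) < (p Set.univ).toReal := by linarith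
    exact ENNReal.toReal_pos_iff.mp this |>.1
  · calc n Set.univ = ENNReal.ofReal ((n Set.univ).toReal) :=
        (ENNReal.ofReal_toReal (measure_ne_top _ _)).symm
    _ ≤ ENNReal.ofReal ε := ENNReal.ofReal_le_ofReal hnle
  · set r := (p Set.univ).toReal with hrdef
    have hr0 : 0 < r := by linarith
    apply tv_le_of_pair
    intro A hA
    have expand : ∀ B : Set X, MeasurableSet B →
        (ν.toSignedMeasure - r⁻¹ • p.toSignedMeasure) B =
          (ν.toSignedMeasure - μ) B + (1 - r⁻¹) * (p B).toReal - (n B).toReal := by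
      intro B hB
      rw [VectorMeasure.sub_apply, VectorMeasure.sub_apply, VectorMeasure.smul_apply,
        Measure.toSignedMeasure_apply_measurable hB, hμA B hB, smul_eq_mul,
        Measure.toSignedMeasure_apply_measurable hB]
      simp only [Measure.real]
      ring
    rw [expand A hA, expand Aᶜ hA.compl]
    have h1 : (ν.toSignedMeasure - μ) A - (ν.toSignedMeasure - μ) Aᶜ ≤ ε := key A hA
    have h2 : 0 ≤ 1 - r⁻¹ := by
      have : r⁻¹ ≤ 1 := by
        rw [inv_le_one_iff₀]; right; linarith
      linarith
    have h3 : (1 - r⁻¹) * (p A).toReal ≤ (1 - r⁻¹) * r := by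
      apply mul_le_mul_of_nonneg_left (hpA A) h2
    have h4 : (1 - r⁻¹) * r = r - 1 := by field_simp
    have h5 : r - 1 = (n Set.univ).toReal := by linarith
    have h6 : 0 ≤ (1 - r⁻¹) * (p Aᶜ).toReal :=
      mul_nonneg h2 ENNReal.toReal_nonneg
    have h7 : (n Aᶜ).toReal ≤ (n Set.univ).toReal := hnA Aᶜ
    have h8 : 0 ≤ (n A).toReal := ENNReal.toReal_nonneg
    nlinarith
end

section
/- Let X be a measurable space and let μ, ν be finite signed measures on X with Jordan decompositions μ = μ⁺ − μ⁻ and ν = ν⁺ − ν⁻, such that μ⁺(X) > 0 and ν⁺(X) > 0. Then ‖ (1/μ⁺(X))·μ⁺ − (1/ν⁺(X))·ν⁺ ‖ ≤ 2·‖μ − ν‖ / μ⁺(X). -/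
open MeasureTheory

namespace StmtAux12

variable {X : Type*} [MeasurableSpace X]

/-- A signed measure is bounded above by (the real value of) its Jordan positive part. -/
lemma le_posPart (s : SignedMeasure X) {B : Set X} (hB : MeasurableSet B) :
    s B ≤ (s.toJordanDecomposition.posPart B).toReal := by
  conv_lhs => rw [← s.toSignedMeasure_toJordanDecomposition]
  rw [JordanDecomposition.toSignedMeasure, Measure.toSignedMeasure_sub_apply hB]
  have h : (0:ℝ) ≤ (s.toJordanDecomposition.negPart B).toReal := ENNReal.toReal_nonneg
  simp only [Measure.real]
  linarith

lemma posPart_mono_univ (s : SignedMeasure X) (B : Set X) :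
    (s.toJordanDecomposition.posPart B).toReal ≤
      (s.toJordanDecomposition.posPart Set.univ).toReal :=
  ENNReal.toReal_mono (measure_ne_top _ _) (measure_mono (Set.subset_univ B))

/-- Key comparison: `μ⁺(A) ≤ ν⁺(A) + (μ-ν)⁺(X)`. -/
lemma posPart_le (μ ν : SignedMeasure X) {A : Set X} (hA : MeasurableSet A) :
    (μ.toJordanDecomposition.posPart A).toReal ≤
      (ν.toJordanDecomposition.posPart A).toReal +
      ((μ - ν).toJordanDecomposition.posPart Set.univ).toReal := by
  obtain ⟨i, hi₁, hi₂, hi₃, hp, hn⟩ := μ.toJordanDecomposition_spec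
  rw [hp, SignedMeasure.toMeasureOfZeroLE_apply _ hi₂ hi₁ hA]
  simp only [ENNReal.coe_toReal, NNReal.coe_mk]
  have hiA : MeasurableSet (i ∩ A) := hi₁.inter hA
  have h1 : μ (i ∩ A) = ν (i ∩ A) + (μ - ν) (i ∩ A) := by
    rw [VectorMeasure.sub_apply]; ring
  have h2 : ν (i ∩ A) ≤ (ν.toJordanDecomposition.posPart (i ∩ A)).toReal := le_posPart ν hiA
  have h3 : (μ - ν) (i ∩ A) ≤ ((μ - ν).toJordanDecomposition.posPart (i ∩ A)).toReal :=
    le_posPart _ hiA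
  have h4 : (ν.toJordanDecomposition.posPart (i ∩ A)).toReal ≤
      (ν.toJordanDecomposition.posPart A).toReal :=
    ENNReal.toReal_mono (measure_ne_top _ _) (measure_mono Set.inter_subset_right)
  have h5 := posPart_mono_univ (μ - ν) (i ∩ A)
  linarith

/-- Total variation is bounded by a one-sided bound plus a one-sided bound of the negation. -/
lemma tv_le (s : SignedMeasure X) {C D : ℝ}
    (hC : ∀ A : Set X, MeasurableSet A → s A ≤ C)
    (hD : ∀ A : Set X, MeasurableSet A → -s A ≤ D) :
    (s.totalVariation Set.univ).toReal ≤ C + D := by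
  obtain ⟨i, hi₁, hi₂, hi₃, hp, hn⟩ := s.toJordanDecomposition_spec
  rw [SignedMeasure.totalVariation, Measure.add_apply, hp, hn,
    SignedMeasure.toMeasureOfZeroLE_apply _ hi₂ hi₁ MeasurableSet.univ,
    SignedMeasure.toMeasureOfLEZero_apply _ hi₃ hi₁.compl MeasurableSet.univ,
    ← ENNReal.coe_add, ENNReal.coe_toReal, NNReal.coe_add, NNReal.coe_mk, NNReal.coe_mk]
  have h1 := hC (i ∩ Set.univ) (hi₁.inter MeasurableSet.univ)
  have h2 := hD (iᶜ ∩ Set.univ) (hi₁.compl.inter MeasurableSet.univ)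
  linarith

lemma mul_aux {qa b x t : ℝ} (hqa : 0 ≤ qa) (hqb : qa ≤ b) (hxt : x ≤ t) (ht : 0 ≤ t) :
    qa * x ≤ t * b := by
  rcases le_or_gt 0 x with h | h
  · calc qa * x ≤ b * x := mul_le_mul_of_nonneg_right hqb h
    _ ≤ b * t := mul_le_mul_of_nonneg_left hxt (hqa.trans hqb)
    _ = t * b := mul_comm _ _
  · have : qa * x ≤ 0 := mul_nonpos_of_nonneg_of_nonpos hqa h.le
    exact this.trans (mul_nonneg ht (hqa.trans hqb))

lemma real_aux {a b pa qa tp tn : ℝ} (ha : 0 < a) (hb : 0 < b)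
    (hqa0 : 0 ≤ qa) (hqab : qa ≤ b) (hp : pa ≤ qa + tp) (hba : b - a ≤ tn)
    (htn : 0 ≤ tn) : a⁻¹ * pa - b⁻¹ * qa ≤ (tp + tn) / a := by
  have key : qa * (b - a) ≤ tn * b := mul_aux hqa0 hqab hba htn
  have h1 : pa * b - qa * a ≤ (tp + tn) * b := by
    nlinarith [mul_le_mul_of_nonneg_right hp hb.le]
  have heq : a⁻¹ * pa - b⁻¹ * qa = (pa * b - qa * a) / (a * b) := by
    field_simp
  rw [heq, div_le_div_iff₀ (mul_pos ha hb) ha]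
  nlinarith [mul_le_mul_of_nonneg_right h1 ha.le]

lemma real_aux2 {a b pa qa tp tn : ℝ} (ha : 0 < a) (hb : 0 < b)
    (hqa0 : 0 ≤ qa) (hqab : qa ≤ b) (hq : qa ≤ pa + tn) (hab : a - b ≤ tp)
    (htp : 0 ≤ tp) : b⁻¹ * qa - a⁻¹ * pa ≤ (tp + tn) / a := by
  have key : qa * (a - b) ≤ tp * b := mul_aux hqa0 hqab hab htp
  have h1 : qa * a - pa * b ≤ (tp + tn) * b := by
    nlinarith [mul_le_mul_of_nonneg_right hq hb.le]
  have heq : b⁻¹ * qa - a⁻¹ * pa = (qa * a - pa * b) / (a * b) := by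
    field_simp
  rw [heq, div_le_div_iff₀ (mul_pos ha hb) ha]
  nlinarith [mul_le_mul_of_nonneg_right h1 ha.le]

end StmtAux12

/-- **Lemma B.12.** The simplex projection `P(μ) := μ⁺/μ⁺(X)` is almost Lipschitz in total
variation: for finite signed measures `μ, ν` with `μ⁺(X) > 0` and `ν⁺(X) > 0`,
`‖P(μ) − P(ν)‖ ≤ 2‖μ − ν‖/μ⁺(X)`. -/
theorem stmt12 {X : Type*} [MeasurableSpace X] (μ ν : SignedMeasure X)
    (hμ_pos : 0 < μ.toJordanDecomposition.posPart Set.univ)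
    (hν_pos : 0 < ν.toJordanDecomposition.posPart Set.univ) :
    (((μ.toJordanDecomposition.posPart Set.univ).toReal)⁻¹ •
        μ.toJordanDecomposition.posPart.toSignedMeasure -
      ((ν.toJordanDecomposition.posPart Set.univ).toReal)⁻¹ •
        ν.toJordanDecomposition.posPart.toSignedMeasure).totalVariation Set.univ ≤
      2 * (μ - ν).totalVariation Set.univ / μ.toJordanDecomposition.posPart Set.univ := by
  open StmtAux12 in
  set p := μ.toJordanDecomposition.posPart with hpdef
  set q := ν.toJordanDecomposition.posPart with hqdef
  have hpt : p Set.univ ≠ ⊤ := measure_ne_top _ _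
  have hqt : q Set.univ ≠ ⊤ := measure_ne_top _ _
  set a := (p Set.univ).toReal with hadef
  set b := (q Set.univ).toReal with hbdef
  have ha : 0 < a := ENNReal.toReal_pos hμ_pos.ne' hpt
  have hb : 0 < b := ENNReal.toReal_pos hν_pos.ne' hqt
  set tp := ((μ - ν).toJordanDecomposition.posPart Set.univ).toReal with htpdef
  set tn := ((μ - ν).toJordanDecomposition.negPart Set.univ).toReal with htndef
  have htp : 0 ≤ tp := ENNReal.toReal_nonneg
  have htn : 0 ≤ tn := ENNReal.toReal_nonneg
  have hswap : (ν - μ).toJordanDecomposition.posPart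
      = (μ - ν).toJordanDecomposition.negPart := by
    rw [show ν - μ = -(μ - ν) from (neg_sub μ ν).symm,
      SignedMeasure.toJordanDecomposition_neg]
    rfl
  have hkey1 : ∀ A : Set X, MeasurableSet A → (p A).toReal ≤ (q A).toReal + tp :=
    fun A hA => StmtAux12.posPart_le μ ν hA
  have hkey2 : ∀ A : Set X, MeasurableSet A → (q A).toReal ≤ (p A).toReal + tn := by
    intro A hA
    have h := StmtAux12.posPart_le ν μ hA
    rwa [hswap] at h
  -- the real-valued bound
  have hmain : (((a : ℝ)⁻¹ • p.toSignedMeasure -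
      (b : ℝ)⁻¹ • q.toSignedMeasure).totalVariation Set.univ).toReal
      ≤ (tp + tn) / a + (tp + tn) / a := by
    apply StmtAux12.tv_le
    · intro A hA
      have happ : ((a : ℝ)⁻¹ • p.toSignedMeasure - (b : ℝ)⁻¹ • q.toSignedMeasure) A
          = a⁻¹ * (p A).toReal - b⁻¹ * (q A).toReal := by
        rw [VectorMeasure.sub_apply, VectorMeasure.smul_apply, VectorMeasure.smul_apply,
          Measure.toSignedMeasure_apply_measurable hA,
          Measure.toSignedMeasure_apply_measurable hA, smul_eq_mul, smul_eq_mul]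
        simp only [Measure.real]
      rw [happ]
      exact StmtAux12.real_aux ha hb ENNReal.toReal_nonneg
        (ENNReal.toReal_mono hqt (measure_mono (Set.subset_univ A)))
        (hkey1 A hA)
        (by have := hkey2 Set.univ MeasurableSet.univ; linarith) htn
    · intro A hA
      have happ : -(((a : ℝ)⁻¹ • p.toSignedMeasure - (b : ℝ)⁻¹ • q.toSignedMeasure) A)
          = b⁻¹ * (q A).toReal - a⁻¹ * (p A).toReal := by
        rw [VectorMeasure.sub_apply, VectorMeasure.smul_apply, VectorMeasure.smul_apply,
          Measure.toSignedMeasure_apply_measurable hA,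
          Measure.toSignedMeasure_apply_measurable hA, smul_eq_mul, smul_eq_mul]
        simp only [Measure.real]
        ring
      rw [happ]
      exact StmtAux12.real_aux2 ha hb ENNReal.toReal_nonneg
        (ENNReal.toReal_mono hqt (measure_mono (Set.subset_univ A)))
        (hkey2 A hA)
        (by have := hkey1 Set.univ MeasurableSet.univ; linarith) htp
  -- pass from reals to `ℝ≥0∞`
  have hLfin : (((a : ℝ)⁻¹ • p.toSignedMeasure -
      (b : ℝ)⁻¹ • q.toSignedMeasure).totalVariation Set.univ) ≠ ⊤ := by
    rw [SignedMeasure.totalVariation, Measure.add_apply]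
    exact ENNReal.add_ne_top.2 ⟨measure_ne_top _ _, measure_ne_top _ _⟩
  have hTfin : (μ - ν).totalVariation Set.univ ≠ ⊤ := by
    rw [SignedMeasure.totalVariation, Measure.add_apply]
    exact ENNReal.add_ne_top.2 ⟨measure_ne_top _ _, measure_ne_top _ _⟩
  have hRfin : 2 * (μ - ν).totalVariation Set.univ / p Set.univ ≠ ⊤ :=
    (ENNReal.div_lt_top (ENNReal.mul_ne_top (by norm_num) hTfin) hμ_pos.ne').ne
  rw [← ENNReal.toReal_le_toReal hLfin hRfin]
  have hT : ((μ - ν).totalVariation Set.univ).toReal = tp + tn := by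
    rw [SignedMeasure.totalVariation, Measure.add_apply,
      ENNReal.toReal_add (measure_ne_top _ _) (measure_ne_top _ _)]
  have hR : (2 * (μ - ν).totalVariation Set.univ / p Set.univ).toReal
      = 2 * (tp + tn) / a := by
    rw [ENNReal.toReal_div, ENNReal.toReal_mul, hT, ENNReal.toReal_ofNat]
  rw [hR]
  calc (((a : ℝ)⁻¹ • p.toSignedMeasure -
      (b : ℝ)⁻¹ • q.toSignedMeasure).totalVariation Set.univ).toReal
      ≤ (tp + tn) / a + (tp + tn) / a := hmain
    _ = 2 * (tp + tn) / a := by ring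
end
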